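/- arXiv:1902.06264 — 5 statements merged into one kernel-verified Lean document; each statement's English description precedes it below -/
import Mathlib

section
/- For the dihedral group D of order 4b (b ≥ 1) generated by two reflections s, t of the plane with angle π/(2b) between their mirrors, one has ∑_{g ∈ D} x^{M_s(g)} y^{M(g)−M_s(g)} = (1 + y)(1 + b·x + (b−1)·y), where M(g) = dim im(g − 1) is the motion dimension in the standard 2-dimensional reflection representation, and M_s(g) ∈ {0,1} records whether the one-dimensional sign character V_s (sending s ↦ −1, t ↦ 1) is nontrivial on g. -/
-- rank helpers (verified)
lemma rank2 (A : Matrix (Fin 2) (Fin 2) ℝ) (h : A.det ≠ 0) : A.rank = 2 := by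
  have := Matrix.rank_of_isUnit A ((Matrix.isUnit_iff_isUnit_det A).2 (isUnit_iff_ne_zero.2 h))
  simpa using this

lemma rank1 (A : Matrix (Fin 2) (Fin 2) ℝ) (h : A.det = 0) (h0 : A ≠ 0) : A.rank = 1 := by
  have hle : A.rank ≤ 1 := by
    obtain ⟨v, hv, hAv⟩ := (Matrix.exists_mulVec_eq_zero_iff).2 h
    have hker : LinearMap.ker A.mulVecLin ≠ ⊥ := by
      intro hbot
      exact hv (by simpa [hbot] using (LinearMap.mem_ker.2 (by simpa using hAv) : v ∈ LinearMap.ker A.mulVecLin))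
    have hk1 : 1 ≤ Module.finrank ℝ (LinearMap.ker A.mulVecLin) := by
      rw [Nat.one_le_iff_ne_zero]
      intro hz
      exact hker (Submodule.finrank_eq_zero.1 hz)
    have := LinearMap.finrank_range_add_finrank_ker A.mulVecLin
    simp only [Module.finrank_pi, Fintype.card_fin] at this
    rw [Matrix.rank]
    omega
  have hge : A.rank ≠ 0 := by
    intro hz
    apply h0
    have : LinearMap.range A.mulVecLin = ⊥ := Submodule.finrank_eq_zero.1 hz
    have h2 : A.mulVecLin = 0 := LinearMap.range_eq_bot.1 this
    ext i j
    have h3 : A.mulVecLin (Pi.single j 1) = 0 := by rw [h2]; rfl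
    have := congrFun h3 i
    simpa [Matrix.mulVecLin_apply, Matrix.mulVec_single] using this
  omega



open Real in
/-- The reflection representation of the dihedral group of order `4b`, where the
generating reflections `s = sr 0` and `t = sr 1` have mirrors at angle `π/(2b)`:
the rotation `r k` acts by rotation through `k·π/b` and the reflection `sr k`
acts by reflection across the line at angle `k·π/(2b)`. -/
noncomputable def rho (b : ℕ) : DihedralGroup (2 * b) → Matrix (Fin 2) (Fin 2) ℝ
  | DihedralGroup.r k => !![cos (k.val * π / b), -sin (k.val * π / b);
                            sin (k.val * π / b),  cos (k.val * π / b)]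
  | DihedralGroup.sr k => !![cos (k.val * π / b),  sin (k.val * π / b);
                             sin (k.val * π / b), -cos (k.val * π / b)]

/-- The one-dimensional character `V_s` of the dihedral group of order `4b`
with `V_s(s) = V_s(sr 0) = -1` and `V_s(t) = V_s(sr 1) = 1`. -/
def chiS (b : ℕ) : DihedralGroup (2 * b) → ℤ
  | DihedralGroup.r k => (-1) ^ k.val
  | DihedralGroup.sr k => (-1) ^ (k.val + 1)

/-- `M_{V_s}(g) = dim im (V_s(g) − 1) ∈ {0,1}`: whether `V_s` is nontrivial on `g`. -/
def MsD (b : ℕ) (g : DihedralGroup (2 * b)) : ℕ := if chiS b g = 1 then 0 else 1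

/-- `M(g) = dim im (g − 1)` in the 2-dimensional reflection representation. -/
noncomputable def MD (b : ℕ) (g : DihedralGroup (2 * b)) : ℕ := (rho b g - 1).rank

section Helpers
open Real


-- MsD values
lemma MsD_r (b : ℕ) (k : ZMod (2*b)) : MsD b (DihedralGroup.r k) = if Even k.val then 0 else 1 := by
  rcases Nat.even_or_odd k.val with h | h
  · simp [MsD, chiS, h.neg_one_pow, h]
  · simp [MsD, chiS, h.neg_one_pow, Nat.not_even_iff_odd.2 h]

lemma MsD_sr (b : ℕ) (k : ZMod (2*b)) : MsD b (DihedralGroup.sr k) = if Even k.val then 1 else 0 := by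
  rcases Nat.even_or_odd k.val with h | h
  · have : Odd (k.val + 1) := Even.add_one h
    simp [MsD, chiS, this.neg_one_pow, h]
  · have : Even (k.val + 1) := Odd.add_one h
    simp [MsD, chiS, this.neg_one_pow, Nat.not_even_iff_odd.2 h]

-- MD values
lemma MD_r_zero (b : ℕ) [NeZero (2*b)] : MD b (DihedralGroup.r 0) = 0 := by
  have hv : (0 : ZMod (2*b)).val = 0 := ZMod.val_zero
  have : rho b (DihedralGroup.r 0) - 1 = 0 := by
    ext i j
    fin_cases i <;> fin_cases j <;>
      simp [rho, hv, Matrix.one_fin_two, Matrix.sub_apply]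
  rw [MD, this, Matrix.rank_zero]

lemma MD_r_ne (b : ℕ) (hb : 1 ≤ b) [NeZero (2*b)] (k : ZMod (2*b)) (hk : k ≠ 0) :
    MD b (DihedralGroup.r k) = 2 := by
  set θ : ℝ := k.val * π / b with hθ
  have hbpos : (0:ℝ) < b := by exact_mod_cast hb
  have hkv : 1 ≤ k.val := Nat.one_le_iff_ne_zero.2 (fun h => hk ((ZMod.val_eq_zero k).1 h))
  have hklt : k.val < 2 * b := ZMod.val_lt k
  have hθpos : 0 < θ := by
    apply div_pos (mul_pos _ pi_pos) hbpos
    exact_mod_cast hkv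
  have hθlt : θ < 2 * π := by
    rw [hθ, div_lt_iff₀ hbpos]
    have : (k.val : ℝ) < 2 * b := by exact_mod_cast hklt
    nlinarith [pi_pos]
  have hcos : cos θ ≠ 1 := by
    intro h
    have := (cos_eq_one_iff_of_lt_of_lt (by linarith [pi_pos]) (by linarith)).1 h
    linarith
  apply rank2
  have hdet : (rho b (DihedralGroup.r k) - 1).det = 2 - 2 * cos θ := by
    simp [rho, Matrix.det_fin_two, Matrix.sub_apply, Matrix.one_fin_two, ← hθ, -ZMod.natCast_val]
    nlinarith [sin_sq_add_cos_sq θ]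
  rw [hdet]
  intro h
  apply hcos
  linarith

lemma MD_sr (b : ℕ) (k : ZMod (2*b)) : MD b (DihedralGroup.sr k) = 1 := by
  set θ : ℝ := k.val * π / b with hθ
  apply rank1
  · simp [rho, Matrix.det_fin_two, Matrix.sub_apply, Matrix.one_fin_two, ← hθ, -ZMod.natCast_val]
    nlinarith [sin_sq_add_cos_sq θ]
  · intro h0
    have h00 : cos θ - 1 = 0 := by
      have := congrFun (congrFun h0 0) 0
      simpa [rho, Matrix.sub_apply, Matrix.one_fin_two, ← hθ, -ZMod.natCast_val] using this
    have h11 : -cos θ - 1 = 0 := by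
      have := congrFun (congrFun h0 1) 1
      simpa [rho, Matrix.sub_apply, Matrix.one_fin_two, ← hθ, sub_eq_zero] using this
    linarith

def dihEquiv (n : ℕ) : (ZMod n) ⊕ (ZMod n) ≃ DihedralGroup n where
  toFun := Sum.elim DihedralGroup.r DihedralGroup.sr
  invFun g := match g with
    | DihedralGroup.r k => Sum.inl k
    | DihedralGroup.sr k => Sum.inr k
  left_inv := by rintro (k | k) <;> rfl
  right_inv := by rintro (k | k) <;> rfl

noncomputable def zmodFinEquiv (n : ℕ) [NeZero n] : ZMod n ≃ Fin n where
  toFun k := ⟨k.val, ZMod.val_lt k⟩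
  invFun i := (i.val : ZMod n)
  left_inv k := by simp [ZMod.natCast_val, ZMod.cast_id]
  right_inv i := by
    ext
    simp [ZMod.val_natCast_of_lt i.isLt]

lemma parity_sum (b : ℕ) (u v : ℝ) :
    ∑ k ∈ Finset.range (2*b), (if Even k then u else v) = b*u + b*v := by
  induction b with
  | zero => simp
  | succ n ih =>
    have h2 : 2*(n+1) = (2*n + 1) + 1 := by ring
    rw [h2, Finset.sum_range_succ, Finset.sum_range_succ, ih]
    have he : Even (2*n) := even_two_mul n
    have ho : ¬ Even (2*n+1) := by simp [Nat.even_add_one, he]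
    rw [if_neg ho, if_pos (by simpa [Nat.even_add_one] using ho)]
    push_cast
    ring

lemma zmod_parity_sum (n : ℕ) [NeZero n] (u v : ℝ) :
    ∑ k : ZMod n, (if Even k.val then u else v)
      = ∑ k ∈ Finset.range n, (if Even k then u else v) := by
  rw [← Fin.sum_univ_eq_sum_range]
  exact Fintype.sum_equiv (zmodFinEquiv n) _ _ (fun k => rfl)


end Helpers

/-- `∑_{g ∈ D} x^{M_s(g)} y^{M(g)−M_s(g)} = (1 + y)(1 + b·x + (b−1)·y)` for the
dihedral group `D` of order `4b`. -/
theorem stmt1 (b : ℕ) (hb : 1 ≤ b) [NeZero (2 * b)] (x y : ℝ) :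
    ∑ g : DihedralGroup (2 * b), x ^ MsD b g * y ^ (MD b g - MsD b g)
      = (1 + y) * (1 + b * x + ((b : ℝ) - 1) * y) := by
  rw [← Fintype.sum_equiv (dihEquiv (2*b))
        (fun p => x ^ MsD b (dihEquiv (2*b) p) * y ^ (MD b (dihEquiv (2*b) p) - MsD b (dihEquiv (2*b) p)))
        _ (fun p => rfl), Fintype.sum_sum_type]
  have hrot : ∀ k : ZMod (2*b),
      x ^ MsD b (DihedralGroup.r k) * y ^ (MD b (DihedralGroup.r k) - MsD b (DihedralGroup.r k))
        = (if Even k.val then y^2 else x*y) + (if k = 0 then 1 - y^2 else 0) := by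
    intro k
    by_cases hk : k = 0
    · subst hk
      have hv : (0 : ZMod (2*b)).val = 0 := ZMod.val_zero
      rw [MD_r_zero b, MsD_r, hv]
      simp
    · rw [MD_r_ne b hb k hk, MsD_r, if_neg hk]
      rcases Nat.even_or_odd k.val with h | h
      · simp [h]
      · simp [Nat.not_even_iff_odd.2 h]
  have hrefl : ∀ k : ZMod (2*b),
      x ^ MsD b (DihedralGroup.sr k) * y ^ (MD b (DihedralGroup.sr k) - MsD b (DihedralGroup.sr k))
        = (if Even k.val then x else y) := by
    intro k
    rw [MD_sr b, MsD_sr]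
    rcases Nat.even_or_odd k.val with h | h
    · simp [h]
    · simp [Nat.not_even_iff_odd.2 h]
  simp only [dihEquiv, Equiv.coe_fn_mk, Sum.elim_inl, Sum.elim_inr]
  rw [Finset.sum_congr rfl (fun k _ => hrot k), Finset.sum_congr rfl (fun k _ => hrefl k),
    Finset.sum_add_distrib, zmod_parity_sum, zmod_parity_sum, parity_sum, parity_sum,
    Finset.sum_ite_eq' Finset.univ (0 : ZMod (2*b)) (fun _ => 1 - y^2),
    if_pos (Finset.mem_univ _)]
  ring
end

section
/- Let G = G(a,1,n) with a > 1 be the group of n×n monomial matrices whose nonzero entries are a-th roots of unity. For 0 ≤ r ≤ n, the number of elements g ∈ G with dim im(g − 1) = r (in the natural n-dimensional representation) equals ∑_{j=0}^{r} C(n−r+j, j) · a^{r−j} · (a−1)^j · c(n, n−r+j), where c(n,k) is the unsigned Stirling number of the first kind. -/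
/-- The number of cycles of a permutation (fixed points count as 1-cycles). -/
def cyclesCount {n : ℕ} (σ : Equiv.Perm (Fin n)) : ℕ :=
  σ.cycleType.card + (Finset.univ.filter fun x => σ x = x).card

/-- The unsigned Stirling number of the first kind `c(n,k)`. -/
def stirC (n k : ℕ) : ℕ :=
  (Finset.univ.filter fun σ : Equiv.Perm (Fin n) => cyclesCount σ = k).card

/-- The monomial matrix of `G(a,1,n)` with underlying permutation `σ` and with the
nonzero entry in column `j` equal to the `a`-th root of unity `ζ^{f j}`,
`ζ = exp(2πi/a)`. Every element of `G(a,1,n)` arises exactly once this way. -/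
noncomputable def gmat (a n : ℕ) (f : Fin n → ZMod a) (σ : Equiv.Perm (Fin n)) :
    Matrix (Fin n) (Fin n) ℂ := fun i j =>
  if σ j = i then Complex.exp (2 * Real.pi * Complex.I * (f j).val / a) else 0

/-!
Write `g = gmat a n f σ = M(σ, w)` with `w = ζ^f`. A vector `v` is fixed by `g` iff
`v (σ x) = w x * v x` for all `x`, so on each cycle of `σ` it is determined by its value at one
point. Comparing `∏ v ∘ σ = ∏ v` over a cycle shows that this value must vanish unless the
product of `w` over the cycle is `1`, i.e. unless `f` sums to `0` on the cycle; conversely, on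
such a cycle `∑_{j<ℓ} g^j e_x` is a fixed vector. Hence `dim ker (g - 1)` is the number of
zero-sum cycles and `rank (g - 1) = r` iff exactly `n - r` of the `k` cycles of `σ` have zero sum.
The cycle-sum map `(Fin n → ZMod a) → (cycles of σ → ZMod a)` is a surjective homomorphism, so
this happens for `C(k, n-r) (a-1)^(k-(n-r)) a^(n-k)` decorations `f`; summing over `σ`, grouped by
`k = n - r + j`, gives the formula.
-/

open Equiv Equiv.Perm Finset Matrix

theorem AddChar.map_sum_eq_prod {A M ι : Type*} [AddCommMonoid A] [CommMonoid M]
    (ψ : AddChar A M) (s : Finset ι) (f : ι → A) : ψ (∑ i ∈ s, f i) = ∏ i ∈ s, ψ (f i) := by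
  have := map_prod ψ.toMonoidHom (fun i => Multiplicative.ofAdd (f i)) s
  rwa [← ofAdd_sum] at this

theorem AddMonoidHom.card_filter_comp_mul_card {G M : Type*} [AddGroup G] [Fintype G]
    [AddGroup M] [Fintype M] [DecidableEq M] (φ : G →+ M) (hφ : Function.Surjective φ)
    (p : M → Prop) [DecidablePred p] :
    #{g | p (φ g)} * Fintype.card M = #{m | p m} * Fintype.card G := by
  have hfiber (m : M) : #{g | φ g = m} = #{g | φ g = 0} :=
    AddMonoidHom.card_fiber_eq_of_mem_range φ (hφ m) (hφ 0)
  have hcard : Fintype.card G = Fintype.card M * #{g | φ g = 0} := by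
    rw [← card_univ, card_eq_sum_card_fiberwise (t := univ) (f := φ) (by simp)]
    simp [hfiber]
  have hp : #{g | p (φ g)} = #{m | p m} * #{g | φ g = 0} := by
    rw [card_eq_sum_card_fiberwise (t := {m | p m}) (f := φ) (fun g hg => by simpa using hg),
      ← smul_eq_mul, ← sum_const]
    refine sum_congr rfl fun m hm => ?_
    rw [filter_filter, ← hfiber m]
    exact congrArg card <| filter_congr fun g _ =>
      ⟨And.right, fun h => ⟨h ▸ (mem_filter.1 hm).2, h⟩⟩
  rw [hp, hcard]
  ring

theorem card_filter_card_filter_eq_zero {ι A : Type*} [Fintype ι] [DecidableEq ι]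
    [Zero A] [Fintype A] [DecidableEq A] (m : ℕ) :
    #{s : ι → A | #{i | s i = 0} = m} =
      (Fintype.card ι).choose m * (Fintype.card A - 1) ^ (Fintype.card ι - m) := by
  have hfiber (Z : Finset ι) : #{s : ι → A | ({i | s i = 0} : Finset ι) = Z} =
      (Fintype.card A - 1) ^ (Fintype.card ι - #Z) := by
    have hpi : ({s : ι → A | ({i | s i = 0} : Finset ι) = Z} : Finset _) =
        Fintype.piFinset fun i => if i ∈ Z then {0} else {0}ᶜ := by
      ext s
      simp only [mem_filter, mem_univ, true_and, Fintype.mem_piFinset, Finset.ext_iff]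
      refine forall_congr' fun i => ?_
      split_ifs <;> simp_all
    rw [hpi, Fintype.card_piFinset]
    simp [apply_ite card, prod_ite, card_compl, filter_not, card_univ_sdiff]
  rw [card_eq_sum_card_fiberwise (t := powersetCard m univ)
    (f := fun s : ι → A => ({i | s i = 0} : Finset ι)) fun s hs => by simpa using hs,
    ← card_univ, ← card_powersetCard, ← smul_eq_mul, ← sum_const]
  refine sum_congr rfl fun Z hZ => ?_
  obtain ⟨-, hZm⟩ := mem_powersetCard.1 hZ
  rw [filter_filter, ← hZm, card_univ, ← hfiber Z]
  exact congrArg card <| filter_congr fun s _ => ⟨And.right, fun h => ⟨h ▸ rfl, h⟩⟩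

namespace Equiv.Perm

section Cycles

variable {α : Type*}

theorem minimalPeriod_pos [Finite α] (σ : Perm α) (x : α) : 0 < Function.minimalPeriod σ x :=
  Function.minimalPeriod_pos_of_mem_periodicPts (σ.injective.mem_periodicPts x)

abbrev Cycles (σ : Perm α) := Quotient (SameCycle.setoid σ)

namespace Cycles

theorem mk_eq_mk_iff {σ : Perm α} {x y : α} :
    (Quotient.mk _ x : Cycles σ) = Quotient.mk _ y ↔ σ.SameCycle x y :=
  Quotient.eq

@[simp]
theorem mk_pow_apply (σ : Perm α) (k : ℕ) (x : α) :
    (Quotient.mk _ ((σ ^ k) x) : Cycles σ) = Quotient.mk _ x :=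
  mk_eq_mk_iff.2 (sameCycle_pow_left.2 (.refl _ _))

@[simp]
theorem mk_apply (σ : Perm α) (x : α) : (Quotient.mk _ (σ x) : Cycles σ) = Quotient.mk _ x :=
  mk_eq_mk_iff.2 (sameCycle_apply_left.2 (.refl _ _))

@[simp]
theorem mk_symm_apply (σ : Perm α) (x : α) :
    (Quotient.mk _ (σ.symm x) : Cycles σ) = Quotient.mk _ x :=
  mk_eq_mk_iff.2 (sameCycle_symm_apply_left.2 (.refl _ _))

end Cycles

variable [Fintype α] [DecidableEq α]

instance (σ : Perm α) : DecidableRel (SameCycle.setoid σ).r :=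
  inferInstanceAs (DecidableRel σ.SameCycle)

instance (σ : Perm α) : Fintype (Cycles σ) := Quotient.fintype _

instance (σ : Perm α) : DecidableEq (Cycles σ) := Quotient.decidableEq

def cycleLabel (σ : Perm α) (x : α) : σ.cycleFactorsFinset ⊕ {x // σ x = x} :=
  if h : σ x = x then .inr ⟨x, h⟩
  else .inl ⟨σ.cycleOf x, cycleOf_mem_cycleFactorsFinset_iff.2 (mem_support.2 h)⟩

theorem sameCycle_iff_cycleLabel_eq (σ : Perm α) (x y : α) :
    σ.SameCycle x y ↔ σ.cycleLabel x = σ.cycleLabel y := by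
  unfold cycleLabel
  by_cases hx : σ x = x <;> by_cases hy : σ y = y <;> simp only [hx, hy, dite_true, dite_false]
  · exact ⟨fun h => by simp [h.eq_of_left hx], fun h => by cases h; rfl⟩
  · exact ⟨fun h => absurd (h.eq_of_left hx ▸ hx) hy, nofun⟩
  · exact ⟨fun h => absurd (h.symm.eq_of_left hy ▸ hy) hx, nofun⟩
  · rw [sameCycle_iff_cycleOf_eq_of_mem_support (mem_support.2 hx) (mem_support.2 hy)]
    simp

theorem cycleLabel_surjective (σ : Perm α) : Function.Surjective σ.cycleLabel := by
  rintro (⟨c, hc⟩ | ⟨x, hx⟩)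
  · obtain ⟨x, hxc⟩ := (mem_cycleFactorsFinset_iff.1 hc).1.nonempty_support
    have hx : σ x ≠ x := mem_support.1 (mem_cycleFactorsFinset_support_le hc hxc)
    refine ⟨x, ?_⟩
    simp [cycleLabel, hx, ← cycle_is_cycleOf hxc hc]
  · exact ⟨x, by simp [cycleLabel, hx]⟩

theorem card_cycles (σ : Perm α) :
    Fintype.card (Cycles σ) = Multiset.card σ.cycleType + #{x | σ x = x} := by
  rw [Fintype.card_congr ((Quotient.congrRight σ.sameCycle_iff_cycleLabel_eq).trans
    (Setoid.quotientKerEquivOfSurjective _ σ.cycleLabel_surjective)), Fintype.card_sum,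
    Fintype.card_coe, Fintype.card_subtype, cycleType_def, Multiset.card_map]
  rfl

end Cycles

section CycleSum

variable {α A : Type*} [Fintype α] [DecidableEq α] (σ : Perm α)

def cycleSum [AddCommMonoid A] : (α → A) →+ (Cycles σ → A) where
  toFun f o := ∑ x with Quotient.mk _ x = o, f x
  map_zero' := by
    funext o
    simp
  map_add' f g := by
    funext o
    simp [sum_add_distrib]

theorem cycleSum_surjective [AddCommMonoid A] : Function.Surjective (cycleSum σ (A := A)) :=
  fun s => by
  refine ⟨fun x => if x = (Quotient.mk _ x : Cycles σ).out then s (Quotient.mk _ x) else 0, ?_⟩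
  funext o
  change ∑ x with Quotient.mk _ x = o, _ = s o
  rw [sum_eq_single_of_mem o.out (by simp)]
  · simp
  · intro x hx hne
    rw [(mem_filter.1 hx).2, if_neg hne]

theorem card_filter_card_cycleSum_eq_zero [AddCommGroup A] [Fintype A] [DecidableEq A] (m : ℕ) :
    #{f : α → A | #{o | cycleSum σ f o = 0} = m} =
      (Fintype.card (Cycles σ)).choose m * (Fintype.card A - 1) ^ (Fintype.card (Cycles σ) - m) *
        Fintype.card A ^ (Fintype.card α - Fintype.card (Cycles σ)) := by
  have h := (cycleSum σ).card_filter_comp_mul_card σ.cycleSum_surjective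
    (fun s : Cycles σ → A => #{o | s o = 0} = m)
  rw [card_filter_card_filter_eq_zero, Fintype.card_fun, Fintype.card_fun] at h
  refine Nat.eq_of_mul_eq_mul_right
    (pow_pos (Fintype.card_pos (α := A)) (Fintype.card (Cycles σ))) ?_
  rw [h]
  conv_lhs => rw [← Nat.sub_add_cancel (Fintype.card_quotient_le (SameCycle.setoid σ)), pow_add]
  ring

end CycleSum

section MonomialMatrix

variable {α K : Type*} [DecidableEq α] [Field K]

def monomialMatrix (σ : Perm α) (w : α → K) : Matrix α α K :=
  Matrix.of fun i j => if σ j = i then w j else 0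

theorem monomialMatrix_inj {σ σ' : Perm α} {w w' : α → K} (hw : ∀ x, w x ≠ 0)
    (h : monomialMatrix σ w = monomialMatrix σ' w') : σ = σ' ∧ w = w' := by
  have key (j : α) : σ' j = σ j ∧ w' j = w j := by
    have hj := congrFun (congrFun h (σ j)) j
    simp only [monomialMatrix, of_apply, if_true] at hj
    split_ifs at hj with h'
    · exact ⟨h', hj.symm⟩
    · exact absurd hj (hw j)
  exact ⟨Equiv.ext fun j => (key j).1.symm, funext fun j => (key j).2.symm⟩

variable [Fintype α]

def cycleProd (σ : Perm α) (w : α → K) (o : Cycles σ) : K :=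
  ∏ x with Quotient.mk _ x = o, w x

theorem prod_range_minimalPeriod (σ : Perm α) (w : α → K) (x : α) :
    ∏ i ∈ range (Function.minimalPeriod σ x), w ((σ ^ i) x) =
      cycleProd σ w (Quotient.mk _ x) := by
  have himage : (range (Function.minimalPeriod σ x)).image (fun i => (σ ^ i) x) =
      ({y | (Quotient.mk _ y : Cycles σ) = Quotient.mk _ x} : Finset α) := by
    ext y
    simp only [mem_image, mem_range, mem_filter, mem_univ, true_and, Cycles.mk_eq_mk_iff]
    constructor
    · rintro ⟨i, -, rfl⟩
      exact ⟨-i, by simp⟩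
    · intro h
      obtain ⟨i, rfl⟩ := h.symm.exists_nat_pow_eq
      refine ⟨i % Function.minimalPeriod σ x, Nat.mod_lt _ (minimalPeriod_pos σ x), ?_⟩
      simp [← iterate_eq_pow]
  rw [cycleProd, ← himage, prod_image]
  intro i hi j hj hij
  exact Function.iterate_injOn_Iio_minimalPeriod (f := σ) (x := x) (by simpa using hi)
    (by simpa using hj) (by simpa [← iterate_eq_pow] using hij)

def fixedSpace (σ : Perm α) (w : α → K) : Submodule K (α → K) :=
  LinearMap.ker (monomialMatrix σ w - 1).mulVecLin

variable {σ : Perm α} {w : α → K}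

theorem monomialMatrix_mulVec_single (x : α) (c : K) :
    monomialMatrix σ w *ᵥ Pi.single x c = Pi.single (σ x) (w x * c) := by
  ext i
  simp [monomialMatrix, Pi.single_apply, eq_comm]

theorem monomialMatrix_pow_mulVec_single (k : ℕ) (x : α) :
    monomialMatrix σ w ^ k *ᵥ Pi.single x 1 =
      Pi.single ((σ ^ k) x) (∏ i ∈ range k, w ((σ ^ i) x)) := by
  induction k with
  | zero => rw [pow_zero, one_mulVec]; simp
  | succ k ih =>
    rw [pow_succ', ← mulVec_mulVec, ih, monomialMatrix_mulVec_single, prod_range_succ,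
      mul_comm, pow_succ', Perm.mul_apply]

theorem monomialMatrix_mulVec_apply (v : α → K) (x : α) :
    (monomialMatrix σ w *ᵥ v) (σ x) = w x * v x := by
  simp [monomialMatrix, mulVec, dotProduct]

theorem mem_fixedSpace_iff {v : α → K} : v ∈ fixedSpace σ w ↔ ∀ x, v (σ x) = w x * v x := by
  rw [fixedSpace, LinearMap.mem_ker, mulVecLin_apply, sub_mulVec, one_mulVec, sub_eq_zero,
    funext_iff, σ.surjective.forall]
  simp only [monomialMatrix_mulVec_apply, eq_comm]

theorem apply_eq_zero_of_sameCycle {v : α → K} (hv : v ∈ fixedSpace σ w) {x y : α}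
    (hxy : σ.SameCycle x y) (hx : v x = 0) : v y = 0 := by
  obtain ⟨k, rfl⟩ := hxy.exists_nat_pow_eq
  clear hxy
  induction k with
  | zero => simpa using hx
  | succ k ih => rw [pow_succ', Perm.mul_apply, mem_fixedSpace_iff.1 hv, ih, mul_zero]

theorem exists_apply_eq_zero_of_cycleProd_ne_one {v : α → K} (hv : v ∈ fixedSpace σ w)
    {o : Cycles σ} (ho : cycleProd σ w o ≠ 1) : ∃ x, Quotient.mk _ x = o ∧ v x = 0 := by
  have hshift : cycleProd σ w o * ∏ x with (Quotient.mk _ x : Cycles σ) = o, v x =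
      ∏ x with (Quotient.mk _ x : Cycles σ) = o, v x := by
    rw [cycleProd, ← prod_mul_distrib]
    simp_rw [← mem_fixedSpace_iff.1 hv]
    exact prod_nbij' (σ ·) (σ.symm ·) (by simp) (by simp) (by simp) (by simp) (by simp)
  have hzero : ∏ x with (Quotient.mk _ x : Cycles σ) = o, v x = 0 := by
    by_contra h
    exact ho ((mul_eq_right₀ h).1 hshift)
  simpa using prod_eq_zero_iff.1 hzero

theorem eq_zero_of_forall_out {v : α → K} (hv : v ∈ fixedSpace σ w)
    (h : ∀ o, cycleProd σ w o = 1 → v o.out = 0) : v = 0 := by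
  funext x
  obtain ⟨y, hy, hvy⟩ : ∃ y, (Quotient.mk _ y : Cycles σ) = Quotient.mk _ x ∧ v y = 0 := by
    by_cases ho : cycleProd σ w (Quotient.mk _ x) = 1
    · exact ⟨_, Quotient.out_eq _, h _ ho⟩
    · exact exists_apply_eq_zero_of_cycleProd_ne_one hv ho
  exact apply_eq_zero_of_sameCycle hv (Cycles.mk_eq_mk_iff.1 hy) hvy

variable (σ w) in
noncomputable def cycleVector (x : α) : α → K :=
  (∑ j ∈ range (Function.minimalPeriod σ x), monomialMatrix σ w ^ j) *ᵥ Pi.single x 1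

/-- `(M - 1) ∑_{j<ℓ} M^j = M^ℓ - 1`, and `M^ℓ e_x = e_x` when `ℓ` is the length of the cycle. -/
theorem cycleVector_mem_fixedSpace {x : α} (hx : cycleProd σ w (Quotient.mk _ x) = 1) :
    cycleVector σ w x ∈ fixedSpace σ w := by
  have hper : (σ ^ Function.minimalPeriod σ x) x = x := by simp [← iterate_eq_pow]
  rw [fixedSpace, LinearMap.mem_ker, mulVecLin_apply, cycleVector, mulVec_mulVec, mul_geom_sum,
    sub_mulVec, monomialMatrix_pow_mulVec_single, hper, prod_range_minimalPeriod, hx, one_mulVec,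
    sub_self]

theorem cycleVector_out_apply_out (o o' : Cycles σ) :
    cycleVector σ w o.out o'.out = (Pi.single o 1 : Cycles σ → K) o' := by
  rw [cycleVector, sum_mulVec, Finset.sum_apply, sum_eq_single 0]
  · rw [monomialMatrix_pow_mulVec_single]
    simp [Pi.single_apply, Quotient.out_inj]
  · intro j hj hj0
    rw [monomialMatrix_pow_mulVec_single, Pi.single_apply, if_neg]
    intro h
    obtain rfl : o' = o := by simpa using congrArg (Quotient.mk (SameCycle.setoid σ)) h
    refine hj0 (Function.IsPeriodicPt.eq_zero_of_lt_minimalPeriod ?_ (mem_range.1 hj))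
    rw [Function.IsPeriodicPt, Function.IsFixedPt, iterate_eq_pow, ← h]
  · simp [minimalPeriod_pos]

variable [DecidableEq K]

variable (σ w) in
noncomputable def fixedSpaceEquiv :
    fixedSpace σ w ≃ₗ[K] ({o : Cycles σ // cycleProd σ w o = 1} → K) :=
  LinearEquiv.ofBijective
    ((LinearMap.pi fun o => LinearMap.proj o.1.out).comp (fixedSpace σ w).subtype) <| by
    refine ⟨(injective_iff_map_eq_zero _).2 fun v hv => ?_, fun c => ?_⟩
    · exact Subtype.ext <| eq_zero_of_forall_out v.2 fun o ho => congrFun hv ⟨o, ho⟩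
    · refine ⟨⟨∑ o, c o • cycleVector σ w o.1.out,
        sum_mem fun o _ => Submodule.smul_mem _ _ (cycleVector_mem_fixedSpace ?_)⟩, ?_⟩
      · rw [Quotient.out_eq]
        exact o.2
      · funext o'
        simp [cycleVector_out_apply_out, Pi.single_apply, ← Subtype.ext_iff]

theorem finrank_fixedSpace :
    Module.finrank K (fixedSpace σ w) = #{o | cycleProd σ w o = 1} := by
  rw [(fixedSpaceEquiv σ w).finrank_eq, Module.finrank_fintype_fun_eq_card, Fintype.card_subtype]

theorem rank_monomialMatrix_sub_one :
    (monomialMatrix σ w - 1).rank = Fintype.card α - #{o | cycleProd σ w o = 1} := by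
  have := LinearMap.finrank_range_add_finrank_ker (monomialMatrix σ w - 1).mulVecLin
  rw [Module.finrank_fintype_fun_eq_card] at this
  rw [← finrank_fixedSpace, Matrix.rank, fixedSpace]
  omega

end MonomialMatrix

end Equiv.Perm

theorem card_cycles_eq_cyclesCount {n : ℕ} (σ : Perm (Fin n)) :
    Fintype.card (Cycles σ) = cyclesCount σ :=
  card_cycles σ

theorem sum_perm_eq_sum_stirC (n : ℕ) (F : ℕ → ℕ) :
    ∑ σ : Perm (Fin n), F (cyclesCount σ) = ∑ k ∈ range (n + 1), stirC n k * F k := by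
  rw [← sum_fiberwise_of_maps_to (t := range (n + 1)) (g := cyclesCount) fun σ _ => ?_]
  · refine sum_congr rfl fun k _ => ?_
    rw [sum_congr rfl fun σ hσ => by rw [(mem_filter.1 hσ).2], sum_const, smul_eq_mul, stirC]
  · rw [mem_range, Nat.lt_succ_iff, ← card_cycles_eq_cyclesCount]
    simpa using Fintype.card_quotient_le (SameCycle.setoid σ)

theorem sum_range_choose_eq (c : ℕ → ℕ) (a n r : ℕ) (hr : r ≤ n) :
    ∑ k ∈ range (n + 1), c k * (k.choose (n - r) * (a - 1) ^ (k - (n - r)) * a ^ (n - k)) =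
      ∑ j ∈ range (r + 1), (n - r + j).choose j * a ^ (r - j) * (a - 1) ^ j * c (n - r + j) := by
  rw [show n + 1 = (n - r) + (r + 1) by omega, sum_range_add,
    sum_eq_zero fun k hk => by rw [Nat.choose_eq_zero_of_lt (mem_range.1 hk)]; ring, zero_add]
  refine sum_congr rfl fun j _ => ?_
  rw [Nat.choose_symm_add, Nat.add_sub_cancel_left, show n - (n - r + j) = r - j by omega]
  ring

theorem gmat_eq_monomialMatrix (a n : ℕ) [NeZero a] (f : Fin n → ZMod a) (σ : Perm (Fin n)) :
    gmat a n f σ = monomialMatrix σ fun j => ZMod.stdAddChar (f j) := by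
  ext i j
  simp [gmat, monomialMatrix, ZMod.stdAddChar_apply, ZMod.toCircle_apply]

theorem gmat_injective (a n : ℕ) [NeZero a] :
    Function.Injective fun p : (Fin n → ZMod a) × Perm (Fin n) => gmat a n p.1 p.2 := by
  rintro ⟨f, σ⟩ ⟨f', σ'⟩ h
  simp only [gmat_eq_monomialMatrix] at h
  obtain ⟨rfl, hff'⟩ := monomialMatrix_inj (fun j => by simp [ZMod.stdAddChar_apply]) h
  exact Prod.ext (funext fun j => ZMod.injective_stdAddChar (congrFun hff' j)) rfl

theorem rank_gmat_sub_one (a n : ℕ) [NeZero a] (f : Fin n → ZMod a) (σ : Perm (Fin n)) :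
    (gmat a n f σ - 1).rank = n - #{o | σ.cycleSum f o = 0} := by
  rw [gmat_eq_monomialMatrix, rank_monomialMatrix_sub_one, Fintype.card_fin]
  congr 2
  refine filter_congr fun o _ => ?_
  rw [cycleProd, ← AddChar.map_sum_eq_prod, ← AddChar.map_zero_eq_one (ZMod.stdAddChar (N := a)),
    ZMod.injective_stdAddChar.eq_iff]
  rfl

theorem rank_gmat_sub_one_eq_iff {a n r : ℕ} [NeZero a] (hr : r ≤ n) (f : Fin n → ZMod a)
    (σ : Perm (Fin n)) :
    (gmat a n f σ - 1).rank = r ↔ #{o | σ.cycleSum f o = 0} = n - r := by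
  have hle : #{o | σ.cycleSum f o = 0} ≤ n :=
    (card_filter_le _ _).trans (by simpa using Fintype.card_quotient_le (SameCycle.setoid σ))
  rw [rank_gmat_sub_one]
  omega

theorem natCard_gmat_eq (a n r : ℕ) [NeZero a] :
    Nat.card {M : Matrix (Fin n) (Fin n) ℂ // (∃ f σ, M = gmat a n f σ) ∧ (M - 1).rank = r} =
      #{p : (Fin n → ZMod a) × Perm (Fin n) | (gmat a n p.1 p.2 - 1).rank = r} := by
  calc _ = Nat.card ((fun p : (Fin n → ZMod a) × Perm (Fin n) => gmat a n p.1 p.2) ''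
        {p | (gmat a n p.1 p.2 - 1).rank = r}) :=
        Nat.card_congr (Equiv.subtypeEquivRight fun M => by aesop)
    _ = _ := by
      rw [Nat.card_image_of_injective (gmat_injective a n), Nat.card_eq_card_toFinset,
        Set.toFinset_ofPred]

theorem stmt3_general (a n r : ℕ) [NeZero a] (hr : r ≤ n) :
    Nat.card {M : Matrix (Fin n) (Fin n) ℂ //
        (∃ f σ, M = gmat a n f σ) ∧ (M - 1).rank = r}
      = ∑ j ∈ Finset.range (r + 1),
          (n - r + j).choose j * a ^ (r - j) * (a - 1) ^ j * stirC n (n - r + j) := by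
  rw [natCard_gmat_eq, card_filter, Fintype.sum_prod_type_right]
  simp_rw [rank_gmat_sub_one_eq_iff hr, ← card_filter, card_filter_card_cycleSum_eq_zero,
    ZMod.card, Fintype.card_fin, card_cycles_eq_cyclesCount]
  exact (sum_perm_eq_sum_stirC n fun k =>
    k.choose (n - r) * (a - 1) ^ (k - (n - r)) * a ^ (n - k)).trans
      (sum_range_choose_eq (stirC n) a n r hr)

/-- In `G = G(a,1,n)` (the group of `n×n` monomial matrices whose nonzero entries are
`a`-th roots of unity), the number of elements `g` with `dim im(g − 1) = r` equals
`∑_{j=0}^{r} C(n−r+j, j)·a^{r−j}·(a−1)^j·c(n, n−r+j)`. -/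
theorem stmt3 (a n r : ℕ) [NeZero a] (ha : 1 < a) (hr : r ≤ n) :
    Nat.card {M : Matrix (Fin n) (Fin n) ℂ //
        (∃ f σ, M = gmat a n f σ) ∧ (M - 1).rank = r}
      = ∑ j ∈ Finset.range (r + 1),
          (n - r + j).choose j * a ^ (r - j) * (a - 1) ^ j * stirC n (n - r + j) :=
  stmt3_general a n r hr
end

section
/- For the Weyl group W = W(B_n) of type B_n, with positive roots e_i (short, squared length 1, 1 ≤ i ≤ n) and e_i ± e_j (long, squared length 2, 1 ≤ i < j ≤ n), the weighted length generating function satisfies ∑_{w ∈ W} q^{𝓛(w)} = ∏_{i=1}^{n} ((1+q^{2i−1})/(1+q)) · ((q^{2i}−1)/(q−1)), where 𝓛(w) = ∑_{α ∈ inv(w)} ||α||². -/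
/-- The positive roots of type `B_n`: the short roots `e_i` (squared length 1) and
the long roots `e_i − e_j`, `e_i + e_j` for `i < j` (squared length 2). -/
def PhiB (n : ℕ) : Finset (Fin n → ℤ) :=
  (Finset.univ.image fun i : Fin n => Pi.single i (1 : ℤ)) ∪
  (((Finset.univ ×ˢ Finset.univ : Finset (Fin n × Fin n)).filter fun p => p.1 < p.2).image
      fun p => Pi.single p.1 (1 : ℤ) - Pi.single p.2 (1 : ℤ)) ∪
  (((Finset.univ ×ˢ Finset.univ : Finset (Fin n × Fin n)).filter fun p => p.1 < p.2).image
      fun p => Pi.single p.1 (1 : ℤ) + Pi.single p.2 (1 : ℤ))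

/-- The signed permutation matrix with underlying permutation `σ` and signs `ε`;
the map `(σ, ε) ↦ bmat n σ ε` is a bijection onto the hyperoctahedral group
`W(B_n)` of signed permutation matrices. -/
def bmat (n : ℕ) (σ : Equiv.Perm (Fin n)) (ε : Fin n → Bool) :
    Matrix (Fin n) (Fin n) ℤ := fun i j =>
  if σ j = i then (if ε j then -1 else 1) else 0

/-- The squared length `‖v‖²` of an integer vector. -/
def nsq {n : ℕ} (v : Fin n → ℤ) : ℕ := (∑ i, v i * v i).toNat

/-- `𝓛(w) = ∑_{α ∈ inv(w)} ‖α‖²`, where `inv(w)` is the set of positive roots sent to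
negative roots by `w⁻¹`. -/
noncomputable def LB (n : ℕ) (w : Matrix (Fin n) (Fin n) ℤ) : ℕ :=
  ∑ α ∈ (PhiB n).filter (fun α => -(w⁻¹.mulVec α) ∈ PhiB n), nsq α

/-!
Write `w = bmat σ ε`. Then `w⁻¹ = bmat τ η` with `τ = σ⁻¹`, `η = ε ∘ σ⁻¹`, and `w⁻¹` sends
`e_i` to `±e_{τ i}`, the sign being `-` exactly when `η i`. A signed vector `±e_a ± e_b` is a
positive root iff its coefficient at `min a b` is `+1`, so the inversions are read off
coordinatewise: `e_i` contributes `1` iff `η i`, and for `i < j` the pair `e_i ± e_j`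
contributes `4` if `τ i < τ j` and `η i`, `0` if `τ i < τ j` and not `η i`, and `2` if
`τ j < τ i`. Hence `𝓛(w) = ∑ᵢ ([η i] (1 + 4 dᵢ) + 2 cᵢ)`, where `cᵢ` is the Lehmer code of `τ`
and `cᵢ + dᵢ = n - 1 - i`. The sum over the signs factorises over `i`; since the Lehmer code is
a bijection from `Perm (Fin n)` onto `∏ᵢ [0, n - i)`, so does the sum over `τ`, and each factor
is `∑_{c ≤ m} (q^{2c} + q^{4m+1-2c}) = (1 + q^{2m+1}) (q^{2m+2} - 1) / (q² - 1)`.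
-/

open Finset Equiv

variable {n : ℕ}

lemma mem_PhiB_iff {x : Fin n → ℤ} : x ∈ PhiB n ↔
    (∃ i, x = Pi.single i 1) ∨
    (∃ i j, i < j ∧ x = Pi.single i 1 - Pi.single j 1) ∨
    (∃ i j, i < j ∧ x = Pi.single i 1 + Pi.single j 1) := by
  simp only [PhiB, mem_union, mem_image, mem_filter, mem_univ, true_and, mem_product,
    Prod.exists, eq_comm]
  aesop

lemma single_mem_PhiB (a : Fin n) : Pi.single a 1 ∈ PhiB n :=
  mem_PhiB_iff.2 (.inl ⟨a, rfl⟩)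

lemma single_sub_single_mem_PhiB {a b : Fin n} (h : a < b) :
    Pi.single a 1 - Pi.single b 1 ∈ PhiB n :=
  mem_PhiB_iff.2 (.inr (.inl ⟨a, b, h, rfl⟩))

lemma single_add_single_mem_PhiB {a b : Fin n} (h : a < b) :
    Pi.single a 1 + Pi.single b 1 ∈ PhiB n :=
  mem_PhiB_iff.2 (.inr (.inr ⟨a, b, h, rfl⟩))

lemma exists_lt_pos_of_mem_PhiB {x : Fin n → ℤ} (hx : x ∈ PhiB n) {k : Fin n} (hk : x k < 0) :
    ∃ m < k, 0 < x m := by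
  rcases mem_PhiB_iff.1 hx with ⟨i, rfl⟩ | ⟨i, j, hij, rfl⟩ | ⟨i, j, hij, rfl⟩
  · simp [Pi.single_apply] at hk; split_ifs at hk <;> omega
  · refine ⟨i, ?_, by simp [hij.ne]⟩
    simp [Pi.single_apply] at hk
    split_ifs at hk <;> omega
  · simp [Pi.single_apply] at hk; split_ifs at hk <;> omega

def boolSign (b : Bool) : ℤ := if b then -1 else 1

lemma neg_boolSign (b : Bool) : -boolSign b = boolSign !b := by
  cases b <;> rfl

lemma boolSign_smul_single_mem_PhiB_iff (b : Bool) (a : Fin n) :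
    boolSign b • Pi.single a (1 : ℤ) ∈ PhiB n ↔ b = false := by
  cases b
  · simpa [boolSign] using single_mem_PhiB a
  · simp only [boolSign, if_true, Bool.true_eq_false, iff_false]
    intro h
    obtain ⟨m, hm, hpos⟩ := exists_lt_pos_of_mem_PhiB h (k := a) (by simp)
    simp [hm.ne] at hpos

lemma boolSign_smul_single_add_mem_PhiB_iff {a b : Fin n} (hab : a < b) (s t : Bool) :
    boolSign s • Pi.single a (1 : ℤ) + boolSign t • Pi.single b 1 ∈ PhiB n ↔ s = false := by
  cases s
  · cases t
    · simpa [boolSign] using single_add_single_mem_PhiB hab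
    · simpa [boolSign, ← sub_eq_add_neg] using single_sub_single_mem_PhiB hab
  · simp only [Bool.true_eq_false, iff_false]
    intro h
    obtain ⟨m, hm, hpos⟩ := exists_lt_pos_of_mem_PhiB h (k := a) (by
      cases t <;> simp [boolSign, hab.ne])
    cases t <;> simp [boolSign, hm.ne, (hm.trans hab).ne] at hpos

lemma nsq_single (a : Fin n) : nsq (Pi.single a (1 : ℤ)) = 1 := by
  simp [nsq, Pi.single_apply]

lemma nsq_single_sub_single {a b : Fin n} (h : a ≠ b) :
    nsq (Pi.single a (1 : ℤ) - Pi.single b 1) = 2 := by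
  simp [nsq, Pi.single_apply, mul_sub, sum_sub_distrib, h, h.symm]

lemma nsq_single_add_single {a b : Fin n} (h : a ≠ b) :
    nsq (Pi.single a (1 : ℤ) + Pi.single b 1) = 2 := by
  simp [nsq, Pi.single_apply, mul_add, sum_add_distrib, h, h.symm]

lemma bmat_mulVec_single (σ : Perm (Fin n)) (ε : Fin n → Bool) (j : Fin n) :
    (bmat n σ ε).mulVec (Pi.single j 1) = boolSign (ε j) • Pi.single (σ j) 1 := by
  ext i
  rw [Matrix.mulVec_single]
  simp only [Matrix.col_apply, MulOpposite.op_one, one_smul, Pi.smul_apply, Pi.single_apply,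
    smul_eq_mul, mul_ite, mul_one, mul_zero, eq_comm (a := i)]
  unfold bmat boolSign
  rfl

lemma bmat_inv (σ : Perm (Fin n)) (ε : Fin n → Bool) :
    (bmat n σ ε)⁻¹ = bmat n σ⁻¹ (fun i => ε (σ⁻¹ i)) := by
  refine Matrix.inv_eq_left_inv ?_
  ext i j
  simp only [Matrix.mul_apply, bmat, Matrix.one_apply]
  rw [sum_eq_single (σ j)]
  · by_cases h : j = i
    · subst h; cases h : ε j <;> simp [h]
    · simp [h, Ne.symm h]
  · intro k _ hk; simp [Ne.symm hk]
  · simp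

lemma sum_PhiB {M : Type*} [AddCommMonoid M] (f : (Fin n → ℤ) → M) :
    ∑ α ∈ PhiB n, f α = ∑ i, f (Pi.single i 1) +
      ∑ i, ∑ j, if i < j then f (Pi.single i 1 - Pi.single j 1) + f (Pi.single i 1 + Pi.single j 1)
        else 0 := by
  set P := (univ ×ˢ univ : Finset (Fin n × Fin n)).filter fun p => p.1 < p.2
  set A := univ.image fun i : Fin n => (Pi.single i 1 : Fin n → ℤ)
  set B := P.image fun p => (Pi.single p.1 1 - Pi.single p.2 1 : Fin n → ℤ)
  set C := P.image fun p => (Pi.single p.1 1 + Pi.single p.2 1 : Fin n → ℤ)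
  -- the three families are told apart by their coordinate sums `1`, `0` and `2`
  have hA : ∀ x ∈ A, ∑ k, x k = 1 := by simp [A]
  have hB : ∀ x ∈ B, ∑ k, x k = 0 := by
    simp only [B, mem_image]; rintro _ ⟨p, -, rfl⟩; simp [sum_sub_distrib]
  have hC : ∀ x ∈ C, ∑ k, x k = 2 := by
    simp only [C, mem_image]; rintro _ ⟨p, -, rfl⟩; simp [sum_add_distrib]
  have disj {S T : Finset (Fin n → ℤ)} {s t : ℤ} (hS : ∀ x ∈ S, ∑ k, x k = s)
      (hT : ∀ x ∈ T, ∑ k, x k = t) (hst : s ≠ t) : Disjoint S T :=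
    disjoint_left.2 fun x hxS hxT => hst ((hS x hxS).symm.trans (hT x hxT))
  have injB : Set.InjOn
      (fun p : Fin n × Fin n => (Pi.single p.1 1 - Pi.single p.2 1 : Fin n → ℤ)) P := by
    rintro ⟨i, j⟩ hij ⟨k, l⟩ hkl h
    simp only [P, coe_filter, mem_product, mem_univ, true_and, Set.mem_ofPred_eq] at hij hkl h
    rw [sub_eq_add_neg, sub_eq_add_neg, ← Pi.single_neg, ← Pi.single_neg,
      Pi.single_add_single_eq_single_add_single one_ne_zero (by norm_num)] at h
    rcases h with ⟨rfl, rfl⟩ | ⟨h, -⟩ | ⟨-, rfl, -⟩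
    · rfl
    · norm_num at h
    · exact absurd hij (lt_irrefl _)
  have injC : Set.InjOn
      (fun p : Fin n × Fin n => (Pi.single p.1 1 + Pi.single p.2 1 : Fin n → ℤ)) P := by
    rintro ⟨i, j⟩ hij ⟨k, l⟩ hkl h
    simp only [P, coe_filter, mem_product, mem_univ, true_and, Set.mem_ofPred_eq] at hij hkl h
    rw [Pi.single_add_single_eq_single_add_single one_ne_zero one_ne_zero] at h
    rcases h with ⟨rfl, rfl⟩ | ⟨-, rfl, rfl⟩ | ⟨h, -⟩
    · rfl
    · exact absurd (hij.trans hkl) (lt_irrefl _)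
    · norm_num at h
  have hP (g : Fin n × Fin n → M) :
      ∑ p ∈ P, g p = ∑ i, ∑ j, if i < j then g (i, j) else 0 := by
    rw [sum_filter, sum_product]
  rw [show PhiB n = A ∪ B ∪ C from rfl, sum_union (disjoint_union_left.2
      ⟨disj hA hC (by norm_num), disj hB hC (by norm_num)⟩),
    sum_union (disj hA hB (by norm_num)),
    sum_image fun i _ j _ h => by_contra fun hij => by simpa [hij] using congrFun h i,
    sum_image injB, sum_image injC, add_assoc, ← sum_add_distrib, hP]

def lehmerCode (τ : Perm (Fin n)) (i : Fin n) : ℕ := #{j ∈ Ioi i | τ j < τ i}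

def coLehmerCode (τ : Perm (Fin n)) (i : Fin n) : ℕ := #{j ∈ Ioi i | τ i < τ j}

lemma lehmerCode_add_coLehmerCode (τ : Perm (Fin n)) (i : Fin n) :
    lehmerCode τ i + coLehmerCode τ i = n - 1 - i := by
  rw [← Fin.card_Ioi, ← card_filter_add_card_filter_not (s := Ioi i) (fun j => τ j < τ i),
    lehmerCode, coLehmerCode]
  congr 2
  refine filter_congr fun j hj => ?_
  have : τ j ≠ τ i := τ.injective.ne (mem_Ioi.1 hj).ne'
  omega

lemma neg_bmat_mulVec_single_sub_single (τ : Perm (Fin n)) (η : Fin n → Bool) (i j : Fin n) :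
    -(bmat n τ η).mulVec (Pi.single i 1 - Pi.single j 1)
      = boolSign (!η i) • Pi.single (τ i) 1 + boolSign (η j) • Pi.single (τ j) 1 := by
  rw [Matrix.mulVec_sub, bmat_mulVec_single, bmat_mulVec_single, ← neg_boolSign]
  module

lemma neg_bmat_mulVec_single_add_single (τ : Perm (Fin n)) (η : Fin n → Bool) (i j : Fin n) :
    -(bmat n τ η).mulVec (Pi.single i 1 + Pi.single j 1)
      = boolSign (!η i) • Pi.single (τ i) 1 + boolSign (!η j) • Pi.single (τ j) 1 := by
  rw [Matrix.mulVec_add, bmat_mulVec_single, bmat_mulVec_single, ← neg_boolSign, ← neg_boolSign]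
  module

lemma long_root_pair_inversion_weight (τ : Perm (Fin n)) (η : Fin n → Bool) {i j : Fin n}
    (hij : i < j) :
    ((if -(bmat n τ η).mulVec (Pi.single i 1 - Pi.single j 1) ∈ PhiB n then
        nsq (Pi.single i (1 : ℤ) - Pi.single j 1) else 0) +
      if -(bmat n τ η).mulVec (Pi.single i 1 + Pi.single j 1) ∈ PhiB n then
        nsq (Pi.single i (1 : ℤ) + Pi.single j 1) else 0)
      = if τ i < τ j then (if η i then 4 else 0) else 2 := by
  rw [neg_bmat_mulVec_single_sub_single, neg_bmat_mulVec_single_add_single,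
    nsq_single_sub_single hij.ne, nsq_single_add_single hij.ne]
  rcases lt_or_gt_of_ne (τ.injective.ne hij.ne) with h | h
  · simp only [boolSign_smul_single_add_mem_PhiB_iff h, if_pos h, Bool.not_eq_false']
    cases η i <;> rfl
  · rw [add_comm (boolSign (!η i) • _), add_comm (boolSign (!η i) • _)]
    simp only [boolSign_smul_single_add_mem_PhiB_iff h, if_neg (lt_asymm h)]
    cases η j <;> rfl

def inversionWeight (τ : Perm (Fin n)) (η : Fin n → Bool) : ℕ :=
  ∑ i, ((if η i then 1 + 4 * coLehmerCode τ i else 0) + 2 * lehmerCode τ i)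

lemma sum_inversions_bmat (τ : Perm (Fin n)) (η : Fin n → Bool) :
    ∑ α ∈ (PhiB n).filter (fun α => -(bmat n τ η).mulVec α ∈ PhiB n), nsq α
      = inversionWeight τ η := by
  rw [sum_filter, sum_PhiB, ← sum_add_distrib, inversionWeight]
  refine sum_congr rfl fun i _ => ?_
  have hshort : (if -(bmat n τ η).mulVec (Pi.single i 1) ∈ PhiB n then
      nsq (Pi.single i (1 : ℤ)) else 0) = if η i then 1 else 0 := by
    simp only [bmat_mulVec_single, ← neg_smul, neg_boolSign, boolSign_smul_single_mem_PhiB_iff,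
      nsq_single, Bool.not_eq_false']
  have hlong : (∑ j, if i < j then (if τ i < τ j then (if η i then 4 else 0) else 2) else 0)
      = (if η i then 4 else 0) * coLehmerCode τ i + 2 * lehmerCode τ i := by
    rw [← sum_filter, filter_lt_eq_Ioi, sum_ite, sum_const, sum_const, smul_eq_mul,
      smul_eq_mul, mul_comm, mul_comm _ 2, coLehmerCode, lehmerCode]
    congr 3
    refine filter_congr fun j hj => ?_
    have : τ j ≠ τ i := τ.injective.ne (mem_Ioi.1 hj).ne'
    omega
  rw [hshort, sum_congr rfl fun j _ =>
    ite_congr rfl (long_root_pair_inversion_weight τ η) fun _ => rfl, hlong]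
  cases η i <;> simp [add_assoc]

lemma LB_bmat (σ : Perm (Fin n)) (ε : Fin n → Bool) :
    LB n (bmat n σ ε) = inversionWeight σ⁻¹ (fun i => ε (σ⁻¹ i)) := by
  rw [LB, bmat_inv, sum_inversions_bmat]

lemma sum_pow_inversionWeight {R : Type*} [CommSemiring R] (q : R) (τ : Perm (Fin n)) :
    ∑ η : Fin n → Bool, q ^ inversionWeight τ η
      = ∏ i, (q ^ (2 * lehmerCode τ i) +
          q ^ (1 + 4 * (n - 1 - i - lehmerCode τ i) + 2 * lehmerCode τ i)) := by
  simp only [inversionWeight, ← prod_pow_eq_pow_sum]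
  rw [← Fintype.prod_sum fun i (b : Bool) =>
    q ^ ((if b then 1 + 4 * coLehmerCode τ i else 0) + 2 * lehmerCode τ i)]
  refine prod_congr rfl fun i _ => ?_
  rw [Fintype.sum_bool, add_comm, ← lehmerCode_add_coLehmerCode τ i, Nat.add_sub_cancel_left]
  simp

def insertPerm (p : Fin (n + 1)) (e : Perm (Fin n)) : Perm (Fin (n + 1)) :=
  p.cycleRange.symm * Perm.decomposeFin.symm (0, e)

@[simp]
lemma insertPerm_zero (p : Fin (n + 1)) (e : Perm (Fin n)) : insertPerm p e 0 = p := by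
  simp [insertPerm]

@[simp]
lemma insertPerm_succ (p : Fin (n + 1)) (e : Perm (Fin n)) (j : Fin n) :
    insertPerm p e j.succ = p.succAbove (e j) := by
  simp [insertPerm]

lemma insertPerm_bijective :
    Function.Bijective fun pe : Fin (n + 1) × Perm (Fin n) => insertPerm pe.1 pe.2 := by
  refine (Fintype.bijective_iff_injective_and_card _).2
    ⟨?_, by simp [Fintype.card_perm, Nat.factorial_succ]⟩
  rintro ⟨p, e⟩ ⟨p', e'⟩ h
  have hp : p = p' := by simpa using congrArg (· 0) h
  subst hp
  refine Prod.ext rfl (Equiv.ext fun j => Fin.succAbove_right_injective (p := p) ?_)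
  simpa using congrArg (· j.succ) h

lemma lehmerCode_insertPerm_zero (p : Fin (n + 1)) (e : Perm (Fin n)) :
    lehmerCode (insertPerm p e) 0 = p := by
  rw [lehmerCode, Fin.Ioi_zero_eq_map, filter_map, card_map,
    card_equiv e (t := {y : Fin n | (y : ℕ) < p})
      (fun _ => by simp [Fin.succAbove_lt_iff_castSucc_lt]; exact Fin.lt_def),
    Fin.card_filter_val_lt, min_eq_right p.is_le]

lemma lehmerCode_insertPerm_succ (p : Fin (n + 1)) (e : Perm (Fin n)) (i : Fin n) :
    lehmerCode (insertPerm p e) i.succ = lehmerCode e i := by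
  rw [lehmerCode, ← Fin.map_succEmb_Ioi, filter_map, card_map]
  simp [lehmerCode]

lemma sum_prod_lehmerCode {R : Type*} [CommSemiring R] :
    ∀ {n : ℕ} (g : Fin n → ℕ → R),
      ∑ τ : Perm (Fin n), ∏ i, g i (lehmerCode τ i) = ∏ i : Fin n, ∑ c ∈ range (n - i), g i c
  | 0, g => by simp
  | n + 1, g => calc
      ∑ τ : Perm (Fin (n + 1)), ∏ i, g i (lehmerCode τ i)
        = ∑ p : Fin (n + 1), ∑ e : Perm (Fin n),
            g 0 p * ∏ i : Fin n, g i.succ (lehmerCode e i) := by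
          rw [← Fintype.sum_bijective _ insertPerm_bijective _ _ fun _ => rfl,
            Fintype.sum_prod_type]
          simp [Fin.prod_univ_succ, lehmerCode_insertPerm_zero, lehmerCode_insertPerm_succ]
      _ = (∑ c ∈ range (n + 1), g 0 c) * ∏ i : Fin n, ∑ c ∈ range (n - i), g i.succ c := by
          rw [← sum_prod_lehmerCode, ← Fin.sum_univ_eq_sum_range (g 0), sum_mul_sum]
      _ = ∏ i : Fin (n + 1), ∑ c ∈ range (n + 1 - i), g i c := by
          simp [Fin.prod_univ_succ]

lemma sum_range_pow_two_mul_add_pow {K : Type*} [Field K] {q : K} (h1 : q ≠ 1) (h2 : q ≠ -1)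
    (m : ℕ) :
    ∑ c ∈ range (m + 1), (q ^ (2 * c) + q ^ (1 + 4 * (m - c) + 2 * c))
      = ((1 + q ^ (2 * (m + 1) - 1)) / (1 + q)) * ((q ^ (2 * (m + 1)) - 1) / (q - 1)) := by
  have hq : 1 + q ≠ 0 := by rwa [add_comm, ← sub_neg_eq_add, sub_ne_zero]
  have hsq : q ^ 2 ≠ 1 := sq_ne_one_iff.2 ⟨h1, h2⟩
  have hreflect : ∑ c ∈ range (m + 1), q ^ (1 + 4 * (m - c) + 2 * c)
      = q ^ (2 * m + 1) * ∑ c ∈ range (m + 1), (q ^ 2) ^ c := by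
    rw [mul_sum, ← sum_range_reflect]
    refine sum_congr rfl fun c hc => ?_
    rw [← pow_mul, ← pow_add]
    congr 1
    have := mem_range.1 hc
    omega
  simp_rw [sum_add_distrib, hreflect, pow_mul, geom_sum_eq hsq]
  rw [show 2 * (m + 1) - 1 = 2 * m + 1 by omega]
  field_simp
  ring

theorem stmt7_general (n : ℕ) (q : ℚ) (h1 : q ≠ 1) (h2 : q ≠ -1) :
    ∑ σ : Equiv.Perm (Fin n), ∑ ε : Fin n → Bool, q ^ LB n (bmat n σ ε)
      = ∏ i ∈ Finset.Icc 1 n,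
          ((1 + q ^ (2 * i - 1)) / (1 + q)) * ((q ^ (2 * i) - 1) / (q - 1)) := by
  set g : ℕ → ℕ → ℚ := fun m c => q ^ (2 * c) + q ^ (1 + 4 * (m - c) + 2 * c)
  calc ∑ σ : Perm (Fin n), ∑ ε : Fin n → Bool, q ^ LB n (bmat n σ ε)
      = ∑ τ : Perm (Fin n), ∑ η : Fin n → Bool, q ^ inversionWeight τ η := by
        refine Fintype.sum_equiv (Equiv.inv _) _ _ fun σ => ?_
        simp only [LB_bmat]
        exact Fintype.sum_equiv (σ.arrowCongr (Equiv.refl Bool)) _ _ fun _ => rfl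
    _ = ∑ τ : Perm (Fin n), ∏ i : Fin n, g (n - 1 - i) (lehmerCode τ i) :=
        sum_congr rfl fun τ _ => sum_pow_inversionWeight q τ
    _ = ∏ i : Fin n, ∑ c ∈ range (n - i), g (n - 1 - i) c := sum_prod_lehmerCode _
    _ = ∏ k ∈ range n, ∑ c ∈ range (k + 1), g k c := by
        rw [Fin.prod_univ_eq_prod_range (fun i => ∑ c ∈ range (n - i), g (n - 1 - i) c),
          ← prod_range_reflect]
        refine prod_congr rfl fun k hk => ?_
        have := mem_range.1 hk
        rw [show n - (n - 1 - k) = k + 1 by omega, show n - 1 - (n - 1 - k) = k by omega]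
    _ = _ := by
        rw [prod_congr rfl fun k _ => sum_range_pow_two_mul_add_pow h1 h2 k,
          ← Ico_add_one_right_eq_Icc, prod_Ico_eq_prod_range, Nat.add_sub_cancel]
        simp only [add_comm 1]

/-- For the Weyl group `W(B_n)`:
`∑_{w ∈ W} q^{𝓛(w)} = ∏_{i=1}^{n} ((1+q^{2i−1})/(1+q))·((q^{2i}−1)/(q−1))`. -/
theorem stmt7 (n : ℕ) (hn : 1 ≤ n) (q : ℚ) (h1 : q ≠ 1) (h2 : q ≠ -1) :
    ∑ σ : Equiv.Perm (Fin n), ∑ ε : Fin n → Bool, q ^ LB n (bmat n σ ε)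
      = ∏ i ∈ Finset.Icc 1 n,
          ((1 + q ^ (2 * i - 1)) / (1 + q)) * ((q ^ (2 * i) - 1) / (q - 1)) :=
  stmt7_general n q h1 h2
end

section
/- For the Weyl group W = W(C_n) of type C_n, with positive roots e_i − e_j, e_i + e_j (short, squared length 1, i < j) and 2e_i (long, squared length 2), one has ∑_{w ∈ W} q^{𝓛(w)} = ((1+q^{n+1})/(1+q)) · ∏_{i=1}^{n} ((q^{2i}−1)/(q−1)), where 𝓛(w) = ∑_{α ∈ inv(w)} ||α||². -/
/-- The positive roots of type `C_n`: the short roots `e_i − e_j`, `e_i + e_j`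
for `i < j` and the long roots `2e_i`. -/
def PhiC (n : ℕ) : Finset (Fin n → ℤ) :=
  (((Finset.univ ×ˢ Finset.univ : Finset (Fin n × Fin n)).filter fun p => p.1 < p.2).image
      fun p => Pi.single p.1 (1 : ℤ) - Pi.single p.2 (1 : ℤ)) ∪
  (((Finset.univ ×ˢ Finset.univ : Finset (Fin n × Fin n)).filter fun p => p.1 < p.2).image
      fun p => Pi.single p.1 (1 : ℤ) + Pi.single p.2 (1 : ℤ)) ∪
  (Finset.univ.image fun i : Fin n => Pi.single i (2 : ℤ))

/-- The signed permutation matrix with underlying permutation `σ` and signs `ε`;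
the map `(σ, ε) ↦ cmat n σ ε` is a bijection onto the group `W(C_n)` of signed
permutation matrices. -/
def cmat (n : ℕ) (σ : Equiv.Perm (Fin n)) (ε : Fin n → Bool) :
    Matrix (Fin n) (Fin n) ℤ := fun i j =>
  if σ j = i then (if ε j then -1 else 1) else 0

/-- The squared length of a `C_n` root in the normalization where short roots
(`e_i ± e_j`, of unnormalized squared length 2) have squared length 1 and the
long roots (`2e_i`) have squared length 2: one half of `∑ v i²`. -/
def nsqC {n : ℕ} (v : Fin n → ℤ) : ℕ := ((∑ i, v i * v i) / 2).toNat

/-- `𝓛(w) = ∑_{α ∈ inv(w)} ‖α‖²`, where `inv(w)` is the set of positive roots sent to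
negative roots by `w⁻¹`. -/
noncomputable def LC (n : ℕ) (w : Matrix (Fin n) (Fin n) ℤ) : ℕ :=
  ∑ α ∈ (PhiC n).filter (fun α => -(w⁻¹.mulVec α) ∈ PhiC n), nsqC α



lemma mem_PhiC_iff {n : ℕ} {v : Fin n → ℤ} :
    v ∈ PhiC n ↔ (∃ i j : Fin n, i < j ∧ Pi.single i (1:ℤ) - Pi.single j 1 = v)
      ∨ (∃ i j : Fin n, i < j ∧ Pi.single i (1:ℤ) + Pi.single j 1 = v)
      ∨ (∃ i : Fin n, Pi.single i (2:ℤ) = v) := by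
  simp only [PhiC, Finset.mem_union, Finset.mem_image, Finset.mem_filter, Finset.mem_product,
    Finset.mem_univ, true_and, and_true, Prod.exists, or_assoc]

-- membership lemmas
lemma single_add_mem {n : ℕ} {a b : Fin n} (hab : a ≠ b) :
    (Pi.single a (1:ℤ) + Pi.single b 1) ∈ PhiC n := by
  rcases hab.lt_or_gt with h | h
  · exact mem_PhiC_iff.mpr (Or.inr (Or.inl ⟨a, b, h, rfl⟩))
  · exact mem_PhiC_iff.mpr (Or.inr (Or.inl ⟨b, a, h, by rw [add_comm]⟩))

lemma single_sub_mem_iff {n : ℕ} {a b : Fin n} (hab : a ≠ b) :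
    (Pi.single a (1:ℤ) - Pi.single b 1) ∈ PhiC n ↔ a < b := by
  constructor
  · intro h
    rcases mem_PhiC_iff.mp h with ⟨i, j, hij, hv⟩ | ⟨i, j, hij, hv⟩ | ⟨i, hv⟩
    · have h1 := congrFun hv a
      have h2 := congrFun hv b
      simp only [Pi.sub_apply, Pi.single_apply] at h1 h2
      split_ifs at h1 h2 <;> simp_all <;> omega
    · have h1 := congrFun hv b
      simp only [Pi.add_apply, Pi.sub_apply, Pi.single_apply] at h1
      split_ifs at h1 <;> simp_all <;> omega
    · have h1 := congrFun hv b
      simp only [Pi.sub_apply, Pi.single_apply] at h1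
      split_ifs at h1 <;> simp_all <;> omega
  · intro h
    exact mem_PhiC_iff.mpr (Or.inl ⟨a, b, h, rfl⟩)

lemma neg_add_not_mem {n : ℕ} {a b : Fin n} (hab : a ≠ b) :
    (-(Pi.single a (1:ℤ)) - Pi.single b 1) ∉ PhiC n := by
  intro h
  rcases mem_PhiC_iff.mp h with ⟨i, j, hij, hv⟩ | ⟨i, j, hij, hv⟩ | ⟨i, hv⟩
  · have h1 := congrFun hv i
    simp only [Pi.sub_apply, Pi.neg_apply, Pi.single_apply] at h1
    split_ifs at h1 <;> simp_all <;> omega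
  · have h1 := congrFun hv i
    simp only [Pi.add_apply, Pi.sub_apply, Pi.neg_apply, Pi.single_apply] at h1
    split_ifs at h1 <;> simp_all <;> omega
  · have h1 := congrFun hv i
    simp only [Pi.sub_apply, Pi.neg_apply, Pi.single_apply] at h1
    split_ifs at h1 <;> simp_all <;> omega

lemma single_two_mem {n : ℕ} (a : Fin n) : (Pi.single a (2:ℤ)) ∈ PhiC n :=
  mem_PhiC_iff.mpr (Or.inr (Or.inr ⟨a, rfl⟩))

lemma neg_single_two_not_mem {n : ℕ} (a : Fin n) : (-(Pi.single a (2:ℤ))) ∉ PhiC n := by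
  intro h
  rcases mem_PhiC_iff.mp h with ⟨i, j, hij, hv⟩ | ⟨i, j, hij, hv⟩ | ⟨i, hv⟩
  · have h1 := congrFun hv i
    have h2 := congrFun hv j
    simp only [Pi.sub_apply, Pi.neg_apply, Pi.single_apply] at h1 h2
    split_ifs at h1 h2 <;> omega
  · have h1 := congrFun hv i
    simp only [Pi.add_apply, Pi.neg_apply, Pi.single_apply] at h1
    split_ifs at h1 <;> omega
  · have h1 := congrFun hv i
    simp only [Pi.neg_apply, Pi.single_apply] at h1
    split_ifs at h1 <;> omega



lemma nsq_single_sub {n : ℕ} {a b : Fin n} (hab : a ≠ b) :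
    nsqC (Pi.single a (1:ℤ) - Pi.single b 1) = 1 := by
  have h : ∀ x : Fin n, (Pi.single a (1:ℤ) - Pi.single b 1 : Fin n → ℤ) x *
        (Pi.single a (1:ℤ) - Pi.single b 1 : Fin n → ℤ) x
      = (if x = a then 1 else 0) + (if x = b then 1 else 0) := by
    intro x
    by_cases h1 : x = a <;> by_cases h2 : x = b <;> simp_all [Pi.single_apply]
  unfold nsqC
  rw [Finset.sum_congr rfl fun x _ => h x, Finset.sum_add_distrib]
  simp

lemma nsq_single_add {n : ℕ} {a b : Fin n} (hab : a ≠ b) :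
    nsqC (Pi.single a (1:ℤ) + Pi.single b 1) = 1 := by
  have h : ∀ x : Fin n, (Pi.single a (1:ℤ) + Pi.single b 1 : Fin n → ℤ) x *
        (Pi.single a (1:ℤ) + Pi.single b 1 : Fin n → ℤ) x
      = (if x = a then 1 else 0) + (if x = b then 1 else 0) := by
    intro x
    by_cases h1 : x = a <;> by_cases h2 : x = b <;> simp_all [Pi.single_apply]
  unfold nsqC
  rw [Finset.sum_congr rfl fun x _ => h x, Finset.sum_add_distrib]
  simp

lemma nsq_single_two {n : ℕ} (a : Fin n) : nsqC (Pi.single a (2:ℤ)) = 2 := by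
  have h : ∀ x : Fin n, (Pi.single a (2:ℤ) : Fin n → ℤ) x * (Pi.single a (2:ℤ) : Fin n → ℤ) x
      = (if x = a then 4 else 0) := by
    intro x
    by_cases h1 : x = a <;> simp_all [Pi.single_apply]
  unfold nsqC
  rw [Finset.sum_congr rfl fun x _ => h x]
  simp

attribute [-simp] Equiv.Perm.coe_inv

@[simp]
theorem Equiv.Perm.apply_inv_self {α : Type*} (f : Equiv.Perm α) (x : α) : f (f⁻¹ x) = x :=
  f.apply_symm_apply x

@[simp]
theorem Equiv.Perm.inv_apply_self {α : Type*} (f : Equiv.Perm α) (x : α) : f⁻¹ (f x) = x :=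
  f.symm_apply_apply x

lemma cmat_mul_right_inv (n : ℕ) (σ : Equiv.Perm (Fin n)) (ε : Fin n → Bool) :
    cmat n σ ε * cmat n σ⁻¹ (fun k => ε (σ⁻¹ k)) = 1 := by
  ext i k
  rw [Matrix.mul_apply, Finset.sum_eq_single (σ⁻¹ k)]
  · simp only [cmat, Matrix.one_apply, Equiv.Perm.apply_inv_self]
    by_cases h : k = i
    · subst h
      by_cases h2 : ε (σ⁻¹ k) <;> simp [h2]
    · simp [h, Ne.symm h]
  · intro j _ hj
    have : (σ⁻¹ k = j) = False := by simp [eq_comm, hj]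
    simp [cmat, this]
  · simp

lemma cmat_inv (n : ℕ) (σ : Equiv.Perm (Fin n)) (ε : Fin n → Bool) :
    (cmat n σ ε)⁻¹ = cmat n σ⁻¹ (fun k => ε (σ⁻¹ k)) :=
  Matrix.inv_eq_right_inv (cmat_mul_right_inv n σ ε)

lemma cmat_mulVec (n : ℕ) (τ : Equiv.Perm (Fin n)) (δ : Fin n → Bool) (v : Fin n → ℤ) :
    (cmat n τ δ).mulVec v = fun i => (if δ (τ⁻¹ i) then -1 else 1) * v (τ⁻¹ i) := by
  funext i
  have h0 : (cmat n τ δ).mulVec v i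
      = ∑ j, (if τ j = i then (if δ j then (-1:ℤ) else 1) else 0) * v j := by
    simp [Matrix.mulVec, dotProduct, cmat]
  rw [h0, Finset.sum_eq_single (τ⁻¹ i)]
  · simp
  · intro j _ hj
    have : (τ j = i) = False := by
      simp only [eq_iff_iff, iff_false]
      exact fun h => hj (by rw [← h, Equiv.Perm.inv_apply_self])
    simp [this]
  · simp

lemma neg_inv_mulVec (n : ℕ) (σ : Equiv.Perm (Fin n)) (ε : Fin n → Bool) (v : Fin n → ℤ) :
    -(((cmat n σ ε)⁻¹).mulVec v) = fun k => (if ε k then 1 else -1) * v (σ k) := by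
  rw [cmat_inv, cmat_mulVec]
  funext k
  simp only [inv_inv, Pi.neg_apply, Equiv.Perm.inv_apply_self]
  by_cases h : ε k <;> simp [h] <;> ring


-- helper: sign-vector
private def SV {n : ℕ} (e : Bool) (a : Fin n) : Fin n → ℤ :=
  if e then Pi.single a 1 else -Pi.single a 1

lemma apply_eq_iff (n : ℕ) (σ : Equiv.Perm (Fin n)) (k i : Fin n) :
    (σ k = i) = (k = σ⁻¹ i) := by
  apply propext
  constructor
  · intro h; rw [← h, Equiv.Perm.inv_apply_self]
  · intro h; rw [h, Equiv.Perm.apply_inv_self]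

lemma neg_inv_sub (n : ℕ) (σ : Equiv.Perm (Fin n)) (ε : Fin n → Bool) (i j : Fin n) :
    -(((cmat n σ ε)⁻¹).mulVec (Pi.single i (1:ℤ) - Pi.single j 1))
      = SV (ε (σ⁻¹ i)) (σ⁻¹ i) - SV (ε (σ⁻¹ j)) (σ⁻¹ j) := by
  rw [neg_inv_mulVec]
  funext k
  simp only [SV, Pi.sub_apply, Pi.single_apply, apply_eq_iff n σ k i, apply_eq_iff n σ k j,
    apply_ite (fun f : Fin n → ℤ => f k), Pi.neg_apply]
  by_cases h1 : k = σ⁻¹ i <;> by_cases h2 : k = σ⁻¹ j <;> by_cases h3 : ε k <;>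
    simp_all <;> ring

lemma neg_inv_add (n : ℕ) (σ : Equiv.Perm (Fin n)) (ε : Fin n → Bool) (i j : Fin n) :
    -(((cmat n σ ε)⁻¹).mulVec (Pi.single i (1:ℤ) + Pi.single j 1))
      = SV (ε (σ⁻¹ i)) (σ⁻¹ i) + SV (ε (σ⁻¹ j)) (σ⁻¹ j) := by
  rw [neg_inv_mulVec]
  funext k
  simp only [SV, Pi.add_apply, Pi.single_apply, apply_eq_iff n σ k i, apply_eq_iff n σ k j,
    apply_ite (fun f : Fin n → ℤ => f k), Pi.neg_apply]
  by_cases h1 : k = σ⁻¹ i <;> by_cases h2 : k = σ⁻¹ j <;> by_cases h3 : ε k <;>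
    simp_all <;> ring

lemma neg_inv_two (n : ℕ) (σ : Equiv.Perm (Fin n)) (ε : Fin n → Bool) (i : Fin n) :
    -(((cmat n σ ε)⁻¹).mulVec (Pi.single i (2:ℤ)))
      = if ε (σ⁻¹ i) then Pi.single (σ⁻¹ i) (2:ℤ) else -Pi.single (σ⁻¹ i) (2:ℤ) := by
  rw [neg_inv_mulVec]
  funext k
  simp only [Pi.single_apply, apply_eq_iff n σ k i,
    apply_ite (fun f : Fin n → ℤ => f k), Pi.neg_apply]
  by_cases h1 : k = σ⁻¹ i <;> by_cases h3 : ε k <;> simp_all <;> ring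

lemma chi_pair (n : ℕ) (σ : Equiv.Perm (Fin n)) (ε : Fin n → Bool) {i j : Fin n} (hij : i < j) :
    ((if -(((cmat n σ ε)⁻¹).mulVec (Pi.single i (1:ℤ) - Pi.single j 1)) ∈ PhiC n then 1 else 0)
     + (if -(((cmat n σ ε)⁻¹).mulVec (Pi.single i (1:ℤ) + Pi.single j 1)) ∈ PhiC n then 1 else 0) : ℕ)
      = (if ε (σ⁻¹ i) then 1 + (if (σ⁻¹ i : Fin n) < σ⁻¹ j then 1 else 0)
         else (if (σ⁻¹ j : Fin n) < σ⁻¹ i then 1 else 0)) := by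
  have hab : (σ⁻¹ i : Fin n) ≠ σ⁻¹ j := fun h => hij.ne (by simpa using congrArg σ h)
  rw [neg_inv_sub, neg_inv_add]
  cases hea : ε (σ⁻¹ i) <;> cases heb : ε (σ⁻¹ j) <;>
    simp only [SV, if_true, if_false, Bool.false_eq_true, Bool.true_eq_false, ite_true, ite_false]
  · rw [neg_sub_neg, ← sub_eq_add_neg]
    have h2 : (-Pi.single (σ⁻¹ i) (1:ℤ) - Pi.single (σ⁻¹ j) 1) ∉ PhiC n := neg_add_not_mem hab
    simp [single_sub_mem_iff hab.symm, h2]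
  · have h1 : (-Pi.single (σ⁻¹ i) (1:ℤ) - Pi.single (σ⁻¹ j) 1) ∉ PhiC n := neg_add_not_mem hab
    rw [neg_add_eq_sub]
    simp [single_sub_mem_iff hab.symm, h1]
  · rw [sub_neg_eq_add, ← sub_eq_add_neg]
    simp [single_add_mem hab, single_sub_mem_iff hab]
  · simp [single_add_mem hab, single_sub_mem_iff hab, Nat.add_comm]

lemma chi_long (n : ℕ) (σ : Equiv.Perm (Fin n)) (ε : Fin n → Bool) (i : Fin n) :
    ((if -(((cmat n σ ε)⁻¹).mulVec (Pi.single i (2:ℤ))) ∈ PhiC n then nsqC (Pi.single i (2:ℤ)) else 0) : ℕ)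
      = (if ε (σ⁻¹ i) then 2 else 0) := by
  rw [neg_inv_two]
  by_cases h : ε (σ⁻¹ i) <;>
    simp [h, single_two_mem, neg_single_two_not_mem, nsq_single_two]

-- notation for the three parts of PhiC
private def PP (n : ℕ) : Finset (Fin n × Fin n) :=
  (Finset.univ ×ˢ Finset.univ).filter fun p => p.1 < p.2

private def S1 (n : ℕ) : Finset (Fin n → ℤ) :=
  (PP n).image fun p => Pi.single p.1 (1 : ℤ) - Pi.single p.2 (1 : ℤ)
private def S2 (n : ℕ) : Finset (Fin n → ℤ) :=
  (PP n).image fun p => Pi.single p.1 (1 : ℤ) + Pi.single p.2 (1 : ℤ)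
private def S3 (n : ℕ) : Finset (Fin n → ℤ) :=
  Finset.univ.image fun i : Fin n => Pi.single i (2 : ℤ)

lemma PhiC_eq (n : ℕ) : PhiC n = (S1 n ∪ S2 n) ∪ S3 n := rfl

lemma mem_PP {n : ℕ} {p : Fin n × Fin n} : p ∈ PP n ↔ p.1 < p.2 := by
  simp [PP]

lemma disj12 (n : ℕ) : Disjoint (S1 n) (S2 n) := by
  rw [Finset.disjoint_left]
  rintro v hv1 hv2
  simp only [S1, S2, Finset.mem_image, Prod.exists] at hv1 hv2
  obtain ⟨a, b, hab, h1⟩ := hv1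
  obtain ⟨c, d, hcd, h2⟩ := hv2
  rw [← h2] at h1
  rw [mem_PP] at hab hcd
  have e1 := congrFun h1 b
  simp only [Pi.sub_apply, Pi.add_apply, Pi.single_apply, Fin.ext_iff, Fin.lt_def] at e1 hab hcd
  split_ifs at e1 <;> omega

lemma disj3 (n : ℕ) : Disjoint (S1 n ∪ S2 n) (S3 n) := by
  rw [Finset.disjoint_left]
  rintro v hv1 hv3
  simp only [S3, Finset.mem_image, Finset.mem_univ, true_and] at hv3
  obtain ⟨c, h2⟩ := hv3
  rcases Finset.mem_union.mp hv1 with hv | hv <;>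
    simp only [S1, S2, Finset.mem_image, Prod.exists] at hv <;>
    obtain ⟨a, b, hab, h1⟩ := hv <;> rw [← h2] at h1 <;> rw [mem_PP] at hab <;>
    [have e1 := congrFun h1 c; have e1 := congrFun h1 c] <;>
    simp only [Pi.sub_apply, Pi.add_apply, Pi.single_apply, Fin.ext_iff, Fin.lt_def] at e1 hab <;>
    split_ifs at e1 <;> omega

lemma inj1 (n : ℕ) : ∀ p ∈ PP n, ∀ p' ∈ PP n,
    (Pi.single p.1 (1:ℤ) - Pi.single p.2 1 : Fin n → ℤ) = (Pi.single p'.1 (1:ℤ) - Pi.single p'.2 1 : Fin n → ℤ) → p = p' := by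
  rintro ⟨a, b⟩ hab ⟨c, d⟩ hcd heq
  rw [mem_PP] at hab hcd
  have e1 := congrFun heq a
  have e2 := congrFun heq b
  simp only [Pi.sub_apply, Pi.single_apply, eq_self_iff_true, if_true, Fin.ext_iff,
    Fin.lt_def] at e1 e2 hab hcd
  simp only [Prod.mk.injEq, Fin.ext_iff]
  split_ifs at e1 e2 <;> omega

lemma inj2 (n : ℕ) : ∀ p ∈ PP n, ∀ p' ∈ PP n,
    (Pi.single p.1 (1:ℤ) + Pi.single p.2 1 : Fin n → ℤ) = (Pi.single p'.1 (1:ℤ) + Pi.single p'.2 1 : Fin n → ℤ) → p = p' := by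
  rintro ⟨a, b⟩ hab ⟨c, d⟩ hcd heq
  rw [mem_PP] at hab hcd
  have e1 := congrFun heq a
  have e2 := congrFun heq b
  simp only [Pi.add_apply, Pi.single_apply, eq_self_iff_true, if_true, Fin.ext_iff,
    Fin.lt_def] at e1 e2 hab hcd
  simp only [Prod.mk.injEq, Fin.ext_iff]
  split_ifs at e1 e2 <;> omega

lemma inj3 (n : ℕ) : ∀ i ∈ (Finset.univ : Finset (Fin n)), ∀ i' ∈ (Finset.univ : Finset (Fin n)),
    (Pi.single i (2:ℤ) : Fin n → ℤ) = (Pi.single i' (2:ℤ) : Fin n → ℤ) → i = i' := by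
  intro i _ i' _ heq
  have e1 := congrFun heq i
  simp only [Pi.single_apply, Fin.ext_iff] at e1
  rw [Fin.ext_iff]
  split_ifs at e1 <;> omega

def Lstat {n : ℕ} (g : Fin n → ℕ) (σ : Equiv.Perm (Fin n)) (ε : Fin n → Bool) : ℕ :=
  (∑ a : Fin n, ∑ b : Fin n,
    if a < b then (if g (σ a) < g (σ b) then (if ε a then 2 else 0) else 1) else 0)
  + ∑ a : Fin n, (if ε a then 2 else 0)

lemma pair_reindex {n : ℕ} (σ : Equiv.Perm (Fin n)) (t : Fin n → Fin n → ℕ) :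
    ∑ p ∈ PP n, t (σ⁻¹ p.1) (σ⁻¹ p.2)
      = ∑ p ∈ PP n, (if σ p.1 < σ p.2 then t p.1 p.2 else t p.2 p.1) := by
  have key : ∀ x y : Fin n, x ≠ y → ¬ x < y → y < x := fun x y h h2 => h.lt_or_gt.resolve_left h2
  refine Finset.sum_nbij'
    (i := fun p => if (σ⁻¹ p.1 : Fin n) < σ⁻¹ p.2 then ((σ⁻¹ p.1 : Fin n), (σ⁻¹ p.2 : Fin n))
      else ((σ⁻¹ p.2 : Fin n), (σ⁻¹ p.1 : Fin n)))
    (j := fun p => if σ p.1 < σ p.2 then (σ p.1, σ p.2) else (σ p.2, σ p.1)) ?_ ?_ ?_ ?_ ?_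
  · rintro ⟨x, y⟩ hxy
    rw [mem_PP] at hxy
    have hne : (σ⁻¹ x : Fin n) ≠ σ⁻¹ y := fun h => hxy.ne (by simpa using congrArg σ h)
    by_cases h : (σ⁻¹ x : Fin n) < σ⁻¹ y <;> simp only [h, if_true, if_false, ite_true, ite_false] <;>
      rw [mem_PP]
    · exact h
    · exact key _ _ hne h
  · rintro ⟨x, y⟩ hxy
    rw [mem_PP] at hxy
    have hne : σ x ≠ σ y := fun h => hxy.ne (σ.injective h)
    by_cases h : σ x < σ y <;> simp only [h, if_true, if_false, ite_true, ite_false] <;> rw [mem_PP]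
    · exact h
    · exact key _ _ hne h
  · rintro ⟨x, y⟩ hxy
    rw [mem_PP] at hxy
    by_cases h : (σ⁻¹ x : Fin n) < σ⁻¹ y <;>
      simp [h, Equiv.Perm.apply_inv_self, hxy, hxy.not_gt]
  · rintro ⟨x, y⟩ hxy
    rw [mem_PP] at hxy
    by_cases h : σ x < σ y <;>
      simp [h, Equiv.Perm.inv_apply_self, hxy, hxy.not_gt]
  · rintro ⟨x, y⟩ hxy
    rw [mem_PP] at hxy
    by_cases h : (σ⁻¹ x : Fin n) < σ⁻¹ y
    · simp [h, Equiv.Perm.apply_inv_self, hxy]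
    · simp [h, Equiv.Perm.apply_inv_self, asymm hxy]

lemma sum_pairs {n : ℕ} (f : Fin n → Fin n → ℕ) :
    ∑ p ∈ PP n, f p.1 p.2 = ∑ a : Fin n, ∑ b : Fin n, if a < b then f a b else 0 := by
  rw [PP, Finset.sum_filter, Finset.sum_product]

lemma t_convert {n : ℕ} (σ : Equiv.Perm (Fin n)) (ε : Fin n → Bool) {a b : Fin n} (hab : a < b) :
    (if σ a < σ b then (if ε a then 1 + (if a < b then 1 else 0) else (if b < a then 1 else 0))
       else (if ε b then 1 + (if b < a then 1 else 0) else (if a < b then 1 else 0)))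
      = (if (σ a : Fin n).val < (σ b : Fin n).val then (if ε a then 2 else 0) else 1) := by
  by_cases h : σ a < σ b
  · have h' : (σ a : Fin n).val < (σ b : Fin n).val := h
    by_cases hea : ε a <;> simp [h, h', hea, hab, asymm hab]
  · have h' : ¬ (σ a : Fin n).val < (σ b : Fin n).val := h
    simp [h, h', hab, asymm hab]

lemma phiC_sum_split (n : ℕ) (F : (Fin n → ℤ) → ℕ) :
    ∑ α ∈ PhiC n, F α
      = ((∑ p ∈ PP n, F (Pi.single p.1 (1:ℤ) - Pi.single p.2 1))
          + ∑ p ∈ PP n, F (Pi.single p.1 (1:ℤ) + Pi.single p.2 1))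
        + ∑ i : Fin n, F (Pi.single i (2:ℤ)) := by
  rw [PhiC_eq, Finset.sum_union (disj3 n), Finset.sum_union (disj12 n)]
  simp only [S1, S2, S3]
  rw [Finset.sum_image (inj1 n), Finset.sum_image (inj2 n), Finset.sum_image (inj3 n)]

lemma LC_eq (n : ℕ) (σ : Equiv.Perm (Fin n)) (ε : Fin n → Bool) :
    LC n (cmat n σ ε) = Lstat Fin.val σ ε := by
  classical
  rw [LC, Finset.sum_filter, phiC_sum_split n
    (fun α => if -(((cmat n σ ε)⁻¹).mulVec α) ∈ PhiC n then nsqC α else 0)]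
  have hpair :
      ((∑ p ∈ PP n, (if -(((cmat n σ ε)⁻¹).mulVec (Pi.single p.1 (1:ℤ) - Pi.single p.2 1)) ∈ PhiC n
            then nsqC (Pi.single p.1 (1:ℤ) - Pi.single p.2 1) else 0))
        + ∑ p ∈ PP n, (if -(((cmat n σ ε)⁻¹).mulVec (Pi.single p.1 (1:ℤ) + Pi.single p.2 1)) ∈ PhiC n
            then nsqC (Pi.single p.1 (1:ℤ) + Pi.single p.2 1) else 0))
      = ∑ a : Fin n, ∑ b : Fin n,
          if a < b then (if (σ a : Fin n).val < (σ b : Fin n).val then (if ε a then 2 else 0) else 1)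
          else 0 := by
    rw [← Finset.sum_add_distrib]
    calc ∑ p ∈ PP n,
          ((if -(((cmat n σ ε)⁻¹).mulVec (Pi.single p.1 (1:ℤ) - Pi.single p.2 1)) ∈ PhiC n
            then nsqC (Pi.single p.1 (1:ℤ) - Pi.single p.2 1) else 0)
          + (if -(((cmat n σ ε)⁻¹).mulVec (Pi.single p.1 (1:ℤ) + Pi.single p.2 1)) ∈ PhiC n
            then nsqC (Pi.single p.1 (1:ℤ) + Pi.single p.2 1) else 0))
        = ∑ p ∈ PP n, (if ε (σ⁻¹ p.1) then 1 + (if (σ⁻¹ p.1 : Fin n) < σ⁻¹ p.2 then 1 else 0)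
            else (if (σ⁻¹ p.2 : Fin n) < σ⁻¹ p.1 then 1 else 0)) := by
          refine Finset.sum_congr rfl fun p hp => ?_
          have hlt := mem_PP.mp hp
          rw [nsq_single_sub hlt.ne, nsq_single_add hlt.ne]
          exact chi_pair n σ ε hlt
      _ = ∑ p ∈ PP n, (if σ p.1 < σ p.2
              then (if ε p.1 then 1 + (if p.1 < p.2 then 1 else 0) else (if p.2 < p.1 then 1 else 0))
              else (if ε p.2 then 1 + (if p.2 < p.1 then 1 else 0) else (if p.1 < p.2 then 1 else 0))) :=
          pair_reindex σ (fun a b => if ε a then 1 + (if a < b then 1 else 0) else (if b < a then 1 else 0))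
      _ = ∑ p ∈ PP n, (if (σ p.1 : Fin n).val < (σ p.2 : Fin n).val then (if ε p.1 then 2 else 0) else 1) := by
          refine Finset.sum_congr rfl fun p hp => t_convert σ ε (mem_PP.mp hp)
      _ = ∑ a : Fin n, ∑ b : Fin n,
          if a < b then (if (σ a : Fin n).val < (σ b : Fin n).val then (if ε a then 2 else 0) else 1)
          else 0 :=
          sum_pairs (fun a b => if (σ a : Fin n).val < (σ b : Fin n).val then (if ε a then 2 else 0) else 1)
  rw [hpair]
  have hlong : (∑ i : Fin n, (if -(((cmat n σ ε)⁻¹).mulVec (Pi.single i (2:ℤ))) ∈ PhiC n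
        then nsqC (Pi.single i (2:ℤ)) else 0))
      = ∑ a : Fin n, (if ε a then 2 else 0) := by
    rw [Finset.sum_congr rfl fun i _ => chi_long n σ ε i]
    exact Equiv.sum_comp σ⁻¹ (fun a => if ε a then 2 else 0)
  rw [hlong, Lstat]


open Finset

lemma card_shift {m : ℕ} (g : Fin (m+1) → ℕ) (p : Fin (m+1)) :
    (Finset.univ.filter fun x : Fin m => g (Equiv.swap 0 p x.succ) < g p).card
      = (Finset.univ.filter fun v : Fin (m+1) => g v < g p).card := by
  refine Finset.card_bij (fun x _ => Equiv.swap 0 p x.succ) ?_ ?_ ?_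
  · intro x hx
    simp only [Finset.mem_filter, Finset.mem_univ, true_and] at hx ⊢
    exact hx
  · intro x _ y _ h
    exact Fin.succ_injective _ ((Equiv.swap 0 p).injective h)
  · intro v hv
    simp only [Finset.mem_filter, Finset.mem_univ, true_and] at hv
    have hvp : v ≠ p := fun h => absurd hv (by rw [h]; exact lt_irrefl _)
    have h0 : Equiv.swap 0 p v ≠ 0 := by
      intro h
      apply hvp
      have h2 := congrArg (Equiv.swap 0 p) h
      rw [Equiv.swap_apply_self, Equiv.swap_apply_left] at h2
      exact h2
    obtain ⟨x, hx⟩ := Fin.exists_succ_eq.mpr h0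
    refine ⟨x, ?_, ?_⟩
    · simp only [Finset.mem_filter, Finset.mem_univ, true_and]
      rw [hx, Equiv.swap_apply_self]
      exact hv
    · show Equiv.swap 0 p x.succ = v
      rw [hx, Equiv.swap_apply_self]

lemma rank_lt {m : ℕ} (g : Fin m → ℕ) (p : Fin m) :
    (Finset.univ.filter fun v => g v < g p).card < m := by
  have h : (Finset.univ.filter fun v : Fin m => g v < g p) ⊂ Finset.univ :=
    Finset.filter_ssubset.mpr ⟨p, Finset.mem_univ p, lt_irrefl _⟩
  simpa using Finset.card_lt_card h

lemma rank_bijective {m : ℕ} (g : Fin m → ℕ) (hg : Function.Injective g) :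
    Function.Bijective
      (fun p : Fin m => (⟨(Finset.univ.filter fun v => g v < g p).card, rank_lt g p⟩ : Fin m)) := by
  rw [Fintype.bijective_iff_injective_and_card]
  refine ⟨?_, rfl⟩
  have key : ∀ p p' : Fin m, g p < g p' →
      (Finset.univ.filter fun v => g v < g p).card
        < (Finset.univ.filter fun v => g v < g p').card := by
    intro p p' hlt
    apply Finset.card_lt_card
    rw [Finset.ssubset_def]
    constructor
    · intro v hv
      simp only [Finset.mem_filter, Finset.mem_univ, true_and] at hv ⊢
      exact hv.trans hlt
    · intro hsub
      have := hsub (Finset.mem_filter.mpr ⟨Finset.mem_univ p, hlt⟩)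
      simp only [Finset.mem_filter, Finset.mem_univ, true_and] at this
      exact lt_irrefl _ this
  intro p p' h
  simp only [Fin.mk.injEq] at h
  rcases lt_trichotomy (g p) (g p') with hl | he | hl
  · exact absurd h (key p p' hl).ne
  · exact hg he
  · exact absurd h.symm (key p' p hl).ne

lemma Lstat_succ {m : ℕ} (g : Fin (m+1) → ℕ) (p : Fin (m+1)) (σ : Equiv.Perm (Fin m))
    (b : Bool) (ε : Fin m → Bool) :
    Lstat g (Equiv.Perm.decomposeFin.symm (p, σ)) (Fin.cons b ε)
      = ((∑ x : Fin m, if g p < g (Equiv.swap 0 p x.succ) then (if b then 2 else 0) else 1)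
          + (if b then 2 else 0))
        + Lstat (fun x => g (Equiv.swap 0 p x.succ)) σ ε := by
  have hre := Equiv.sum_comp σ
    (fun x => if g p < g (Equiv.swap 0 p x.succ) then (if b then (2:ℕ) else 0) else 1)
  simp only [Lstat, Fin.sum_univ_succ, Fin.cons_zero, Fin.cons_succ,
    Equiv.Perm.decomposeFin_symm_apply_zero, Equiv.Perm.decomposeFin_symm_apply_succ,
    Fin.succ_lt_succ_iff, Fin.not_lt_zero, Fin.succ_pos, lt_self_iff_false,
    if_true, if_false, ite_true, ite_false, add_zero, zero_add]
  rw [← hre]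
  ring

lemma jx_ne {m : ℕ} (p : Fin (m+1)) (x : Fin m) : Equiv.swap 0 p x.succ ≠ p := by
  intro h
  have h2 := congrArg (Equiv.swap 0 p) h
  rw [Equiv.swap_apply_self, Equiv.swap_apply_right] at h2
  exact Fin.succ_ne_zero x h2

lemma not_cond_iff {m : ℕ} (g : Fin (m+1) → ℕ) (hg : Function.Injective g) (p : Fin (m+1))
    (x : Fin m) :
    (¬ g p < g (Equiv.swap 0 p x.succ)) ↔ g (Equiv.swap 0 p x.succ) < g p := by
  have hne : g (Equiv.swap 0 p x.succ) ≠ g p := fun h => jx_ne p x (hg h)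
  omega

lemma count_A {m : ℕ} (g : Fin (m+1) → ℕ) (hg : Function.Injective g) (p : Fin (m+1)) :
    (Finset.univ.filter fun x : Fin m => g p < g (Equiv.swap 0 p x.succ)).card
      = m - (Finset.univ.filter fun v => g v < g p).card := by
  have hsplit := Finset.card_filter_add_card_filter_not
    (s := (Finset.univ : Finset (Fin m))) (p := fun x => g p < g (Equiv.swap 0 p x.succ))
  have hneg : (Finset.univ.filter fun x : Fin m => ¬ g p < g (Equiv.swap 0 p x.succ))
      = Finset.univ.filter fun x : Fin m => g (Equiv.swap 0 p x.succ) < g p :=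
    Finset.filter_congr fun x _ => by rw [not_cond_iff g hg p x]
  rw [hneg, card_shift g p] at hsplit
  simp only [Finset.card_univ, Fintype.card_fin] at hsplit
  omega

lemma count_false {m : ℕ} (g : Fin (m+1) → ℕ) (hg : Function.Injective g) (p : Fin (m+1)) :
    (∑ x : Fin m, if g p < g (Equiv.swap 0 p x.succ) then 0 else 1)
      = (Finset.univ.filter fun v => g v < g p).card := by
  rw [← card_shift g p, Finset.card_filter]
  refine Finset.sum_congr rfl fun x _ => ?_
  by_cases h : g p < g (Equiv.swap 0 p x.succ)
  · simp [h, Nat.lt_asymm h]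
  · simp [h, (not_cond_iff g hg p x).mp h]

lemma count_true {m : ℕ} (g : Fin (m+1) → ℕ) (hg : Function.Injective g) (p : Fin (m+1)) :
    (∑ x : Fin m, if g p < g (Equiv.swap 0 p x.succ) then 2 else 1)
      = (m - (Finset.univ.filter fun v => g v < g p).card) + m := by
  have h : ∀ x : Fin m, (if g p < g (Equiv.swap 0 p x.succ) then (2:ℕ) else 1)
      = (if g p < g (Equiv.swap 0 p x.succ) then 1 else 0) + 1 := by
    intro x; split_ifs <;> rfl
  rw [Finset.sum_congr rfl fun x _ => h x, Finset.sum_add_distrib, ← Finset.card_filter,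
    count_A g hg p]
  simp [Finset.card_univ]

lemma sum_bool_funs {m : ℕ} {M : Type*} [AddCommMonoid M] (F : (Fin (m+1) → Bool) → M) :
    ∑ ε : Fin (m+1) → Bool, F ε = ∑ b : Bool, ∑ ε : Fin m → Bool, F (Fin.cons b ε) := by
  rw [← Equiv.sum_comp (Fin.consEquiv fun _ => Bool) F, Fintype.sum_prod_type]
  rfl

lemma sumB (q : ℚ) : ∀ (n : ℕ) (g : Fin n → ℕ), Function.Injective g →
    (∑ σ : Equiv.Perm (Fin n), ∑ ε : Fin n → Bool, q ^ Lstat g σ ε)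
      = ∏ i ∈ Finset.Icc 1 n, ((∑ k ∈ Finset.range i, q ^ k) * (1 + q ^ (i+1))) := by
  intro n
  induction n with
  | zero =>
      intro g hg
      have h0 : Finset.Icc 1 0 = (∅ : Finset ℕ) := rfl
      simp [h0, Lstat]
  | succ m ih =>
      intro g hg
      have hginj : ∀ p : Fin (m+1), Function.Injective (fun x : Fin m => g (Equiv.swap 0 p x.succ)) :=
        fun p => hg.comp ((Equiv.swap 0 p).injective.comp (Fin.succ_injective m))
      set k : Fin (m+1) → ℕ := fun p => (Finset.univ.filter fun v => g v < g p).card with hk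
      have hkle : ∀ p, k p ≤ m := fun p => Nat.lt_succ_iff.mp (rank_lt g p)
      set P : ℚ := ∏ i ∈ Finset.Icc 1 m, ((∑ j ∈ Finset.range i, q ^ j) * (1 + q ^ (i+1))) with hP
      set A : ℚ := ∑ j ∈ Finset.range (m+1), q ^ j with hA
      -- step 1: reindex permutations
      rw [← Equiv.sum_comp Equiv.Perm.decomposeFin.symm
          (fun τ => ∑ ε : Fin (m+1) → Bool, q ^ Lstat g τ ε), Fintype.sum_prod_type]
      -- step 2: inner rewrite
      have hinner : ∀ p : Fin (m+1),
          (∑ σ : Equiv.Perm (Fin m), ∑ ε : Fin (m+1) → Bool,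
            q ^ Lstat g (Equiv.Perm.decomposeFin.symm (p, σ)) ε)
          = (q ^ (k p) + q ^ (2*m+2 - k p)) * P := by
        intro p
        have hcalc : ∀ σ : Equiv.Perm (Fin m),
            (∑ ε : Fin (m+1) → Bool, q ^ Lstat g (Equiv.Perm.decomposeFin.symm (p, σ)) ε)
            = (q ^ (k p) + q ^ (2*m+2 - k p))
              * ∑ ε : Fin m → Bool, q ^ Lstat (fun x => g (Equiv.swap 0 p x.succ)) σ ε := by
          intro σ
          rw [sum_bool_funs]
          have hLs : ∀ b ε, Lstat g (Equiv.Perm.decomposeFin.symm (p, σ)) (Fin.cons b ε)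
              = ((∑ x : Fin m, if g p < g (Equiv.swap 0 p x.succ) then (if b then 2 else 0) else 1)
                  + (if b then 2 else 0))
                + Lstat (fun x => g (Equiv.swap 0 p x.succ)) σ ε := fun b ε => Lstat_succ g p σ b ε
          rw [Fintype.sum_bool]
          simp only [hLs, Bool.false_eq_true, if_true, if_false, ite_true, ite_false, add_zero]
          rw [count_true g hg p, count_false g hg p]
          have hk' : ∀ r : Fin (m+1), (Finset.univ.filter fun v => g v < g r).card = k r :=
            fun _ => rfl
          simp only [hk']
          have e1 : (m - k p) + m + 2 = 2*m+2 - k p := by have := hkle p; omega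
          rw [e1]
          simp only [pow_add]
          rw [← Finset.mul_sum, ← Finset.mul_sum, ← add_mul, add_comm (q ^ (2*m+2-k p)) (q ^ k p)]
        rw [Finset.sum_congr rfl fun σ _ => hcalc σ, ← Finset.mul_sum]
        congr 1
        exact ih (fun x => g (Equiv.swap 0 p x.succ)) (hginj p)
      rw [Finset.sum_congr rfl fun p _ => hinner p, ← Finset.sum_mul]
      -- step 3: evaluate sum over p via rank bijection
      have hsum : (∑ p : Fin (m+1), (q ^ (k p) + q ^ (2*m+2 - k p)))
          = ∑ j ∈ Finset.range (m+1), (q ^ j + q ^ (2*m+2 - j)) := by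
        rw [← Fin.sum_univ_eq_sum_range (fun j => q ^ j + q ^ (2*m+2 - j)) (m+1)]
        exact Fintype.sum_bijective _ (rank_bijective g hg) _ _ (fun p => rfl)
      rw [hsum]
      -- step 4: algebra
      have hrefl : (∑ j ∈ Finset.range (m+1), q ^ (2*m+2 - j)) = q ^ (m+2) * A := by
        have h1 : ∀ j ∈ Finset.range (m+1), q ^ (2*m+2 - j) = (fun t => q ^ (m+2+t)) (m - j) := by
          intro j hj
          rw [Finset.mem_range] at hj
          simp only
          congr 1
          omega
        rw [Finset.sum_congr rfl h1]
        have h2 : ∀ j ∈ Finset.range (m+1), (fun t => q ^ (m+2+t)) (m - j)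
            = (fun t => q ^ (m+2+t)) (m+1-1-j) := by
          intro j hj
          norm_num
        rw [Finset.sum_congr rfl h2, Finset.sum_range_reflect (fun t => q ^ (m+2+t)) (m+1)]
        simp only [pow_add]
        rw [← Finset.mul_sum, ← hA]
      rw [Finset.sum_add_distrib, hrefl, ← hA]
      -- RHS
      rw [Finset.prod_Icc_succ_top (Nat.le_add_left 1 m)
        (f := fun i => (∑ j ∈ Finset.range i, q ^ j) * (1 + q ^ (i+1))), ← hP, ← hA]
      ring


lemma telescope (q : ℚ) : ∀ n : ℕ, (1+q) * ∏ i ∈ Finset.Icc 1 n, (1 + q^(i+1))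
    = (1 + q^(n+1)) * ∏ i ∈ Finset.Icc 1 n, (1 + q^i) := by
  intro n
  induction n with
  | zero => simp
  | succ m ihm =>
      rw [Finset.prod_Icc_succ_top (Nat.le_add_left 1 m) (f := fun i => 1 + q^(i+1)),
          Finset.prod_Icc_succ_top (Nat.le_add_left 1 m) (f := fun i => 1 + q^i)]
      linear_combination (1 + q^(m+2)) * ihm

/-- For the Weyl group `W(C_n)`:
`∑_{w ∈ W} q^{𝓛(w)} = ((1+q^{n+1})/(1+q)) · ∏_{i=1}^{n} ((q^{2i}−1)/(q−1))`. -/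
theorem stmt8 (n : ℕ) (hn : 1 ≤ n) (q : ℚ) (h1 : q ≠ 1) (h2 : q ≠ -1) :
    ∑ σ : Equiv.Perm (Fin n), ∑ ε : Fin n → Bool, q ^ LC n (cmat n σ ε)
      = ((1 + q ^ (n + 1)) / (1 + q)) *
          ∏ i ∈ Finset.Icc 1 n, ((q ^ (2 * i) - 1) / (q - 1)) := by
  have hL : (∑ σ : Equiv.Perm (Fin n), ∑ ε : Fin n → Bool, q ^ LC n (cmat n σ ε))
      = ∑ σ : Equiv.Perm (Fin n), ∑ ε : Fin n → Bool, q ^ Lstat Fin.val σ ε :=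
    Finset.sum_congr rfl fun σ _ => Finset.sum_congr rfl fun ε _ => by rw [LC_eq]
  rw [hL, sumB q n Fin.val Fin.val_injective]
  have hq1 : q - 1 ≠ 0 := sub_ne_zero.mpr h1
  have hq2 : (1:ℚ) + q ≠ 0 := fun h => h2 (by linarith)
  have hgeom : ∀ i : ℕ, (∑ k ∈ Finset.range i, q ^ k) = (q^i - 1)/(q-1) :=
    fun i => geom_sum_eq h1 i
  set X : ℚ := ∏ i ∈ Finset.Icc 1 n, ((q^i - 1)/(q-1)) with hX
  set Z : ℚ := ∏ i ∈ Finset.Icc 1 n, (1 + q^i) with hZ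
  have hsplit : (∏ i ∈ Finset.Icc 1 n, ((∑ k ∈ Finset.range i, q ^ k) * (1 + q ^ (i+1))))
      = X * ∏ i ∈ Finset.Icc 1 n, (1 + q ^ (i+1)) := by
    rw [hX, ← Finset.prod_mul_distrib]
    exact Finset.prod_congr rfl fun i _ => by rw [hgeom i]
  have hY : (∏ i ∈ Finset.Icc 1 n, ((q ^ (2 * i) - 1) / (q - 1))) = X * Z := by
    rw [hX, hZ, ← Finset.prod_mul_distrib]
    refine Finset.prod_congr rfl fun i _ => ?_
    rw [two_mul, pow_add]
    field_simp
    ring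
  have h3 : (∏ i ∈ Finset.Icc 1 n, (1 + q ^ (i+1))) = (1 + q^(n+1)) / (1+q) * Z := by
    rw [div_mul_eq_mul_div, eq_div_iff hq2]
    linear_combination telescope q n
  rw [hsplit, hY, h3]
  ring
end

section
/- For positive integers a, b, j with m = ab and d = gcd(a, b), the number of tuples (p₁,…,p_j) ∈ ({1,…,m−1})^j with p₁+⋯+p_j ≡ 0 mod lcm(a,b) equals d·((m−1)^j − (−1)^j)/m + (−1)^j. -/
open Finset

lemma key_mod (m s : ℕ) (hm : 0 < m) (y : ℕ) :
    ((y + (m - s % m)) % m + s) % m = y % m := by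
  rw [Nat.mod_add_mod]
  have h1 : s % m < m := Nat.mod_lt _ hm
  have h2 := Nat.div_add_mod s m
  have h4 : m * (s / m + 1) = m * (s / m) + m := by ring
  have h3 : y + (m - s % m) + s = y + m * (s / m + 1) := by omega
  rw [h3, Nat.add_mul_mod_self_left]

lemma key_mod2 (m s : ℕ) (hm : 0 < m) (x : ℕ) :
    ((x + s) % m + (m - s % m)) % m = x % m := by
  rw [Nat.mod_add_mod]
  have h1 : s % m < m := Nat.mod_lt _ hm
  have h2 := Nat.div_add_mod s m
  have h4 : m * (s / m + 1) = m * (s / m) + m := by ring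
  have h3 : x + s + (m - s % m) = x + m * (s / m + 1) := by omega
  rw [h3, Nat.add_mul_mod_self_left]

lemma cnt_range (m L s : ℕ) (hm : 0 < m) (hL0 : 0 < L) (hL : L ∣ m) :
    ((Finset.range m).filter fun x => L ∣ x + s).card = m / L := by
  have step1 : ((Finset.range m).filter fun x => L ∣ x + s).card
      = ((Finset.range m).filter fun y => L ∣ y).card := by
    apply Finset.card_nbij' (i := fun x => (x + s) % m)
      (j := fun y => (y + (m - s % m)) % m)
    · intro x hx
      simp only [mem_coe, mem_filter, mem_range] at hx ⊢
      exact ⟨Nat.mod_lt _ hm, (Nat.dvd_mod_iff hL).mpr hx.2⟩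
    · intro y hy
      simp only [mem_coe, mem_filter, mem_range] at hy ⊢
      refine ⟨Nat.mod_lt _ hm, ?_⟩
      rw [← Nat.dvd_mod_iff hL, key_mod m s hm y, Nat.mod_eq_of_lt hy.1]
      exact hy.2
    · intro x hx
      simp only [mem_coe, mem_filter, mem_range] at hx
      show ((x + s) % m + (m - s % m)) % m = x
      rw [key_mod2 m s hm x, Nat.mod_eq_of_lt hx.1]
    · intro y hy
      simp only [mem_coe, mem_filter, mem_range] at hy
      show ((y + (m - s % m)) % m + s) % m = y
      rw [key_mod m s hm y, Nat.mod_eq_of_lt hy.1]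
  have step2 : ((Finset.range m).filter fun y => L ∣ y).card
      = (Finset.range (m / L)).card := by
    apply Finset.card_nbij' (i := fun y => y / L) (j := fun k => L * k)
    · intro y hy
      simp only [mem_coe, mem_filter, mem_range] at hy ⊢
      exact Nat.div_lt_div_of_lt_of_dvd hL hy.1
    · intro k hk
      simp only [mem_coe, mem_filter, mem_range] at hk ⊢
      exact ⟨(Nat.lt_div_iff_mul_lt' hL k).mp hk, Dvd.intro k rfl⟩
    · intro y hy
      simp only [mem_coe, mem_filter, mem_range] at hy
      exact Nat.mul_div_cancel' hy.2
    · intro k hk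
      exact Nat.mul_div_cancel_left k hL0
  rw [step1, step2, Finset.card_range]

lemma cnt_Icc (m L s : ℕ) (hm : 0 < m) (hL0 : 0 < L) (hL : L ∣ m) :
    ((Finset.Icc 1 (m - 1)).filter fun x => L ∣ x + s).card
      + (if L ∣ s then 1 else 0) = m / L := by
  have hIcc : Finset.Icc 1 (m - 1) = (Finset.range m).erase 0 := by
    ext x; simp only [mem_Icc, mem_erase, mem_range]; omega
  rw [hIcc, Finset.filter_erase, ← cnt_range m L s hm hL0 hL]
  by_cases h : L ∣ s
  · have h0 : (0 : ℕ) ∈ (Finset.range m).filter fun x => L ∣ x + s := by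
      simp [hm, h]
    rw [Finset.card_erase_of_mem h0, if_pos h]
    have := Finset.card_pos.mpr ⟨0, h0⟩
    omega
  · have h0 : (0 : ℕ) ∉ (Finset.range m).filter fun x => L ∣ x + s := by
      simp [hm, h]
    rw [Finset.erase_eq_of_notMem h0, if_neg h]; omega

lemma step_card (m L : ℕ) (j : ℕ) :
    ((Fintype.piFinset fun _ : Fin (j+1) => Finset.Icc 1 (m-1)).filter
        fun p => L ∣ ∑ i, p i).card
      = ∑ q ∈ (Fintype.piFinset fun _ : Fin j => Finset.Icc 1 (m-1)),
          ((Finset.Icc 1 (m-1)).filter fun x => L ∣ x + ∑ i, q i).card := by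
  have step1 : ((Fintype.piFinset fun _ : Fin (j+1) => Finset.Icc 1 (m-1)).filter
        fun p => L ∣ ∑ i, p i).card
      = (((Finset.Icc 1 (m-1)) ×ˢ (Fintype.piFinset fun _ : Fin j => Finset.Icc 1 (m-1))).filter
        fun xq => L ∣ xq.1 + ∑ i, xq.2 i).card := by
    apply Finset.card_nbij' (i := fun r => (r 0, Fin.tail r))
      (j := fun xq => Fin.cons xq.1 xq.2)
    · intro r hr
      simp only [mem_coe, mem_filter, Fintype.mem_piFinset, mem_product] at hr ⊢
      refine ⟨⟨hr.1 0, fun i => hr.1 i.succ⟩, ?_⟩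
      have := hr.2
      rwa [Fin.sum_univ_succ] at this
    · intro xq hxq
      simp only [mem_coe, mem_filter, Fintype.mem_piFinset, mem_product] at hxq ⊢
      constructor
      · intro i
        induction i using Fin.cases with
        | zero => simpa using hxq.1.1
        | succ i => simpa using hxq.1.2 i
      · rw [Fin.sum_univ_succ]
        simpa using hxq.2
    · intro r _; exact Fin.cons_self_tail r
    · intro xq _; simp
  rw [step1]
  rw [Finset.card_filter, Finset.sum_product_right]
  congr 1
  ext q
  rw [Finset.card_filter]

lemma main_count (m L d : ℕ) (hm : 0 < m) (hL0 : 0 < L) (hdL : d * L = m) : ∀ j : ℕ,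
    (((Fintype.piFinset fun _ : Fin j => Finset.Icc 1 (m-1)).filter
        fun p => L ∣ ∑ i, p i).card : ℚ)
      = d * (((m : ℚ) - 1) ^ j - (-1) ^ j) / m + (-1) ^ j := by
  have hL : L ∣ m := ⟨d, by rw [← hdL, Nat.mul_comm]⟩
  have hdiv : m / L = d := by rw [← hdL, Nat.mul_div_cancel _ hL0]
  have hmQ : (m : ℚ) ≠ 0 := Nat.cast_ne_zero.mpr hm.ne'
  intro j
  induction j with
  | zero =>
    simp only [pow_zero]
    rw [show ((Fintype.piFinset fun _ : Fin 0 => Finset.Icc 1 (m-1)).filter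
        fun p => L ∣ ∑ i, p i).card = 1 by simp]
    push_cast
    field_simp
    ring
  | succ j ih =>
    have hrec : ((Fintype.piFinset fun _ : Fin (j+1) => Finset.Icc 1 (m-1)).filter
          fun p => L ∣ ∑ i, p i).card
        + ((Fintype.piFinset fun _ : Fin j => Finset.Icc 1 (m-1)).filter
          fun p => L ∣ ∑ i, p i).card
        = d * (m-1)^j := by
      rw [step_card, Finset.card_filter]
      rw [← Finset.sum_add_distrib]
      have : ∀ q ∈ (Fintype.piFinset fun _ : Fin j => Finset.Icc 1 (m-1)),
          ((Finset.Icc 1 (m-1)).filter fun x => L ∣ x + ∑ i, q i).card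
            + (if L ∣ ∑ i, q i then 1 else 0) = d := by
        intro q _
        rw [cnt_Icc m L _ hm hL0 hL, hdiv]
      rw [Finset.sum_congr rfl this, Finset.sum_const, Fintype.card_piFinset]
      simp [Nat.card_Icc, mul_comm]
    have hcast : (((Fintype.piFinset fun _ : Fin (j+1) => Finset.Icc 1 (m-1)).filter
          fun p => L ∣ ∑ i, p i).card : ℚ)
        = d * ((m:ℚ)-1)^j - ((Fintype.piFinset fun _ : Fin j => Finset.Icc 1 (m-1)).filter
          fun p => L ∣ ∑ i, p i).card := by
      have := congrArg (fun n : ℕ => (n : ℚ)) hrec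
      push_cast at this
      have hm1 : ((m - 1 : ℕ) : ℚ) = (m : ℚ) - 1 := by
        push_cast [Nat.cast_sub hm]; ring
      rw [hm1] at this
      linarith
    rw [hcast, ih]
    field_simp
    ring

/-- For positive integers `a, b` with `m = ab` and `d = gcd(a,b)`, the number of
tuples `(p₁,…,p_j) ∈ {1,…,m−1}^j` with `p₁+⋯+p_j ≡ 0 mod lcm(a,b)` equals
`d·((m−1)^j − (−1)^j)/m + (−1)^j`. -/
theorem stmt15 (a b j : ℕ) (ha : 1 ≤ a) (hb : 1 ≤ b) (hj : 1 ≤ j) :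
    (((Fintype.piFinset fun _ : Fin j => Finset.Icc 1 (a * b - 1)).filter
        fun p => Nat.lcm a b ∣ ∑ i, p i).card : ℚ)
      = (Nat.gcd a b) * (((a * b : ℚ) - 1) ^ j - (-1) ^ j) / (a * b) + (-1) ^ j := by
  have h := main_count (a * b) (Nat.lcm a b) (Nat.gcd a b)
    (Nat.mul_pos ha hb) (Nat.lcm_pos ha hb) (Nat.gcd_mul_lcm a b) j
  rw [h]
  push_cast
  ring
end
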